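/- arXiv:1212.1074 — 11 statements merged into one kernel-verified Lean document; each statement's English description precedes it below -/
import Mathlib

section
/- For every d-space (X, dX), the pair (X, d̂X), where d̂X is the set of weakly directed paths of (X, dX), is again a d-space (constant paths are weakly directed, weakly directed paths are closed under concatenation and under precomposition with continuous non-decreasing maps I → I), and moreover dX ⊆ d̂X. -/
open unitInterval Topology Set

/-- Concatenation of two continuous paths `p q : C(I, X)` with `p 1 = q 0`,
traversing `p` on `[0, 1/2]` and `q` on `[1/2, 1]` (both at double speed). -/
noncomputable def concatPath {X : Type*} [TopologicalSpace X]
    (p q : C(unitInterval, X)) (h : p 1 = q 0) : C(unitInterval, X) :=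
  ((⟨p, rfl, rfl⟩ : Path (p 0) (p 1)).trans
    ((⟨q, rfl, rfl⟩ : Path (q 0) (q 1)).cast h rfl)).toContinuousMap

/-- A d-space structure on a topological space `X`: a set of continuous paths
`I → X` containing the constant paths, closed under concatenation and under
precomposition with continuous non-decreasing maps `I → I`. -/
structure DSpace (X : Type*) [TopologicalSpace X] where
  d : Set C(unitInterval, X)
  const_mem : ∀ x : X, ContinuousMap.const unitInterval x ∈ d
  concat_mem : ∀ p ∈ d, ∀ q ∈ d, ∀ h : p 1 = q 0, concatPath p q h ∈ d
  reparam_mem : ∀ p ∈ d, ∀ φ : C(unitInterval, unitInterval), Monotone ⇑φ → p.comp φ ∈ d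

/-- `c` is a directed function on the (open) set `U` for the set of directed
paths `d`: it is continuous on `U` and non-decreasing along every directed path
with image contained in `U`. -/
def IsDirectedFn {X : Type*} [TopologicalSpace X] (d : Set C(unitInterval, X))
    (U : Set X) (c : X → unitInterval) : Prop :=
  ContinuousOn c U ∧ ∀ p ∈ d, Set.range ⇑p ⊆ U → Monotone (c ∘ ⇑p)

/-- A path `p` is weakly directed when, for every directed function `c` on an
open `U`, the map `c ∘ p` is locally non-decreasing on `p ⁻¹' U`. -/
def IsWeaklyDirected {X : Type*} [TopologicalSpace X] (d : Set C(unitInterval, X))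
    (p : C(unitInterval, X)) : Prop :=
  ∀ U : Set X, IsOpen U → ∀ c : X → unitInterval, IsDirectedFn d U c →
    ∀ t : unitInterval, p t ∈ U →
      ∃ V ∈ 𝓝 t, V ⊆ ⇑p ⁻¹' U ∧ MonotoneOn (c ∘ ⇑p) V

/-- The set `d̂X` of weakly directed paths. -/
def satPaths {X : Type*} [TopologicalSpace X] (d : Set C(unitInterval, X)) :
    Set C(unitInterval, X) :=
  {p | IsWeaklyDirected d p}

/-- A set of directed paths is saturated when every weakly directed path is directed. -/
def IsSaturated {X : Type*} [TopologicalSpace X] (d : Set C(unitInterval, X)) : Prop :=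
  satPaths d = d

/-!
A directed path `p` is weakly directed: around `t` pick `[a, b] ⊆ p⁻¹ U`; precomposing `p` with
the clamp onto `[a, b]` gives a directed path inside `U`, along which every directed function on
`U` is monotone. Weak directedness is a local condition at each parameter, so it survives monotone
reparametrisation, and it survives gluing two weakly directed paths at a point `s₀`: at `s₀` the
one-sided monotonicity neighbourhoods on `(-∞, s₀]` and `[s₀, ∞)` combine into a two-sided one.
A concatenation is such a gluing of two reparametrisations.
-/

section WeaklyDirected

variable {X : Type*} [TopologicalSpace X] {d : Set C(I, X)}

theorem isWeaklyDirected_const (d : Set C(I, X)) (x : X) :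
    IsWeaklyDirected d (ContinuousMap.const I x) :=
  fun _ _ _ _ _ hx => ⟨univ, Filter.univ_mem, fun _ _ => hx, fun _ _ _ _ _ => le_rfl⟩

theorem IsWeaklyDirected.comp_monotone {p : C(I, X)} (hp : IsWeaklyDirected d p)
    (φ : C(I, I)) (hφ : Monotone φ) : IsWeaklyDirected d (p.comp φ) := by
  intro U hU c hc t ht
  obtain ⟨V, hV, hVU, hmono⟩ := hp U hU c hc (φ t) ht
  exact ⟨φ ⁻¹' V, φ.continuous.continuousAt.preimage_mem_nhds hV, fun s hs => hVU hs,
    fun s hs u hu hsu => hmono hs hu (hφ hsu)⟩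

theorem IsWeaklyDirected.exists_nhds_monotoneOn_inter {γ p : C(I, X)}
    (hp : IsWeaklyDirected d p) {S : Set I} (hγp : EqOn γ p S) {U : Set X}
    (hU : IsOpen U) {c : X → I} (hc : IsDirectedFn d U c) {t : I}
    (htS : t ∈ S) (ht : γ t ∈ U) :
    ∃ V ∈ 𝓝 t, V ∩ S ⊆ γ ⁻¹' U ∧ MonotoneOn (c ∘ γ) (V ∩ S) := by
  obtain ⟨V, hV, hVU, hmono⟩ := hp U hU c hc t (hγp htS ▸ ht)
  refine ⟨V, hV, fun s hs => show γ s ∈ U from hγp hs.2 ▸ hVU hs.1, fun s hs u hu hsu => ?_⟩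
  simpa only [Function.comp_apply, hγp hs.2, hγp hu.2] using hmono hs.1 hu.1 hsu

theorem IsWeaklyDirected.of_eqOn_Iic_of_eqOn_Ici {γ γ₁ γ₂ : C(I, X)}
    {s₀ : I} (h₁ : IsWeaklyDirected d γ₁) (h₂ : IsWeaklyDirected d γ₂)
    (e₁ : EqOn γ γ₁ (Iic s₀)) (e₂ : EqOn γ γ₂ (Ici s₀)) : IsWeaklyDirected d γ := by
  intro U hU c hc t ht
  rcases lt_trichotomy t s₀ with hts | rfl | hts
  · obtain ⟨V, hV, hVU, hmono⟩ := h₁.exists_nhds_monotoneOn_inter e₁ hU hc hts.le ht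
    exact ⟨V ∩ Iic s₀, Filter.inter_mem hV (Iic_mem_nhds hts), hVU, hmono⟩
  · obtain ⟨V₁, hV₁, hV₁U, hmono₁⟩ :=
      h₁.exists_nhds_monotoneOn_inter e₁ hU hc self_mem_Iic ht
    obtain ⟨V₂, hV₂, hV₂U, hmono₂⟩ :=
      h₂.exists_nhds_monotoneOn_inter e₂ hU hc self_mem_Ici ht
    have hsplit : V₁ ∩ V₂ ⊆ V₁ ∩ Iic t ∪ V₂ ∩ Ici t := fun s hs =>
      (le_total s t).imp (fun h => ⟨hs.1, h⟩) (fun h => ⟨hs.2, h⟩)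
    refine ⟨V₁ ∩ V₂, Filter.inter_mem hV₁ hV₂, hsplit.trans (union_subset hV₁U hV₂U), ?_⟩
    refine (hmono₁.union_right (c := t) hmono₂ ?_ ?_).mono hsplit
    · exact ⟨⟨mem_of_mem_nhds hV₁, self_mem_Iic⟩, fun s hs => hs.2⟩
    · exact ⟨⟨mem_of_mem_nhds hV₂, self_mem_Ici⟩, fun s hs => hs.2⟩
  · obtain ⟨V, hV, hVU, hmono⟩ := h₂.exists_nhds_monotoneOn_inter e₂ hU hc hts.le ht
    exact ⟨V ∩ Ici s₀, Filter.inter_mem hV (Ici_mem_nhds hts), hVU, hmono⟩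

end WeaklyDirected

namespace unitInterval

noncomputable def stretchLeft : C(I, I) :=
  ⟨fun t => projIcc 0 1 zero_le_one (2 * t), continuous_projIcc.comp (by fun_prop)⟩

noncomputable def stretchRight : C(I, I) :=
  ⟨fun t => projIcc 0 1 zero_le_one (2 * t - 1), continuous_projIcc.comp (by fun_prop)⟩

theorem monotone_stretchLeft : Monotone stretchLeft := fun s t hst =>
  monotone_projIcc zero_le_one (by have : (s : ℝ) ≤ t := hst; linarith)

theorem monotone_stretchRight : Monotone stretchRight := fun s t hst =>
  monotone_projIcc zero_le_one (by have : (s : ℝ) ≤ t := hst; linarith)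

end unitInterval

section Concat

variable {X : Type*} [TopologicalSpace X] (p q : C(I, X)) (h : p 1 = q 0)

theorem concatPath_apply (t : I) :
    concatPath p q h t = if (t : ℝ) ≤ 1 / 2 then p (stretchLeft t) else q (stretchRight t) :=
  rfl

theorem concatPath_eqOn_Iic :
    EqOn (concatPath p q h) (p.comp stretchLeft) (Iic ⟨1 / 2, by norm_num, by norm_num⟩) :=
  fun t ht => by rw [concatPath_apply, if_pos (show (t : ℝ) ≤ 1 / 2 from ht)]; rfl

theorem concatPath_eqOn_Ici :
    EqOn (concatPath p q h) (q.comp stretchRight) (Ici ⟨1 / 2, by norm_num, by norm_num⟩) := by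
  intro t ht
  replace ht : 1 / 2 ≤ (t : ℝ) := ht
  rw [concatPath_apply]
  split_ifs with ht'
  · have hleft : stretchLeft t = 1 := by
      ext; simp [stretchLeft, le_antisymm ht' ht]
    have hright : stretchRight t = 0 := by
      ext; simp [stretchRight, le_antisymm ht' ht]
    simp [hleft, hright, h]
  · rfl

end Concat

theorem IsWeaklyDirected.concatPath {X : Type*} [TopologicalSpace X] {d : Set C(I, X)}
    {p q : C(I, X)} (hp : IsWeaklyDirected d p) (hq : IsWeaklyDirected d q) (h : p 1 = q 0) :
    IsWeaklyDirected d (concatPath p q h) :=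
  (hp.comp_monotone _ monotone_stretchLeft).of_eqOn_Iic_of_eqOn_Ici
    (hq.comp_monotone _ monotone_stretchRight) (concatPath_eqOn_Iic p q h)
    (concatPath_eqOn_Ici p q h)

namespace DSpace

variable {X : Type*} [TopologicalSpace X] (D : DSpace X)

theorem monotoneOn_comp_Icc {U : Set X} {c : X → I} (hc : IsDirectedFn D.d U c)
    {p : C(I, X)} (hp : p ∈ D.d) {a b : I} (hab : a ≤ b) (hU : Icc a b ⊆ p ⁻¹' U) :
    MonotoneOn (c ∘ p) (Icc a b) := by
  -- clamping to `[a, b]`: a monotone reparametrisation that fixes `[a, b]` pointwise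
  let φ : C(I, I) := ⟨fun s => projIcc a b hab s, continuous_subtype_val.comp continuous_projIcc⟩
  have hφ : Monotone φ := fun s t hst => Subtype.coe_le_coe.2 (monotone_projIcc hab hst)
  have hmono : Monotone (c ∘ p.comp φ) :=
    hc.2 _ (D.reparam_mem p hp φ hφ) (range_subset_iff.2 fun s => hU (projIcc a b hab s).2)
  intro s hs t ht hst
  simpa [φ, projIcc_of_mem hab hs, projIcc_of_mem hab ht] using hmono hst

theorem d_subset_satPaths : D.d ⊆ satPaths D.d := by
  intro p hp U hU c hc t ht
  obtain ⟨a, b, ⟨hat, htb⟩, hab, habU⟩ := exists_Icc_mem_subset_of_mem_nhds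
    (p.continuous.continuousAt.preimage_mem_nhds (hU.mem_nhds ht))
  exact ⟨Icc a b, hab, habU, D.monotoneOn_comp_Icc hc hp (hat.trans htb) habU⟩

end DSpace

/-- For any d-space `(X, dX)`, the weakly directed paths `d̂X` again form a d-space
structure on `X` (constants, concatenation, reparametrisation), and `dX ⊆ d̂X`. -/
theorem stmt_2 {X : Type*} [TopologicalSpace X] (D : DSpace X) :
    (∀ x : X, ContinuousMap.const unitInterval x ∈ satPaths D.d) ∧
    (∀ p ∈ satPaths D.d, ∀ q ∈ satPaths D.d, ∀ h : p 1 = q 0,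
      concatPath p q h ∈ satPaths D.d) ∧
    (∀ p ∈ satPaths D.d, ∀ φ : C(unitInterval, unitInterval), Monotone ⇑φ →
      p.comp φ ∈ satPaths D.d) ∧
    D.d ⊆ satPaths D.d :=
  ⟨isWeaklyDirected_const D.d, fun _ hp _ hq h => IsWeaklyDirected.concatPath hp hq h,
    fun _ hp φ hφ => IsWeaklyDirected.comp_monotone hp φ hφ, D.d_subset_satPaths⟩
end

section
/- Saturation is functorial: if f : (X, dX) → (Y, dY) is a morphism of d-spaces, then f maps weakly directed paths to weakly directed paths, i.e., f is also a morphism of d-spaces (X, d̂X) → (Y, d̂Y). -/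
open unitInterval Topology Set

theorem IsDirectedFn.comp {X Y : Type*} [TopologicalSpace X] [TopologicalSpace Y]
    {dX : Set C(unitInterval, X)} {dY : Set C(unitInterval, Y)} {f : C(X, Y)}
    (hf : ∀ p ∈ dX, f.comp p ∈ dY) {U : Set Y} {c : Y → unitInterval}
    (hc : IsDirectedFn dY U c) : IsDirectedFn dX (f ⁻¹' U) (c ∘ f) :=
  ⟨hc.1.comp f.continuous.continuousOn fun _ hx => hx, fun p hp hpU =>
    hc.2 (f.comp p) (hf p hp) <| by
      rw [ContinuousMap.coe_comp, range_comp]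
      exact image_subset_iff.2 hpU⟩

theorem IsWeaklyDirected.comp {X Y : Type*} [TopologicalSpace X] [TopologicalSpace Y]
    {dX : Set C(unitInterval, X)} {dY : Set C(unitInterval, Y)} {f : C(X, Y)}
    (hf : ∀ p ∈ dX, f.comp p ∈ dY) {p : C(unitInterval, X)} (hp : IsWeaklyDirected dX p) :
    IsWeaklyDirected dY (f.comp p) := fun U hU c hc t ht =>
  hp (f ⁻¹' U) (hU.preimage f.continuous) (c ∘ f) (hc.comp hf) t ht

/-- Saturation is functorial: a morphism of d-spaces `f : (X, dX) → (Y, dY)` maps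
weakly directed paths to weakly directed paths, i.e. it is also a morphism
`(X, d̂X) → (Y, d̂Y)`. -/
theorem stmt_4 {X Y : Type*} [TopologicalSpace X] [TopologicalSpace Y]
    (D : DSpace X) (E : DSpace Y) (f : C(X, Y))
    (hf : ∀ p ∈ D.d, f.comp p ∈ E.d) :
    ∀ p ∈ satPaths D.d, f.comp p ∈ satPaths E.d := by
  exact fun _ hp => IsWeaklyDirected.comp hf hp
end

section
/- Let X be a topological space and suppose given, for each open U ⊆ X, a set D(U) of continuous maps U → I, such that the restriction of any member of D(U) to any open U' ⊆ U belongs to D(U'). Let d_D X be the set of continuous paths p : I → X such that for every open U ⊆ X and every c ∈ D(U), the map c ∘ p is locally non-decreasing on p⁻¹(U). Then (X, d_D X) is a saturated d-space. -/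
open unitInterval Topology Set

/-- The paths along which all local sections of a presheaf `Dd` of `I`-valued
functions are locally non-decreasing. -/
def dDPaths {X : Type*} [TopologicalSpace X] (Dd : Set X → Set (X → unitInterval)) :
    Set C(unitInterval, X) :=
  {p | ∀ U : Set X, IsOpen U → ∀ c ∈ Dd U, ∀ t : unitInterval, p t ∈ U →
      ∃ V ∈ 𝓝 t, V ⊆ ⇑p ⁻¹' U ∧ MonotoneOn (c ∘ ⇑p) V}

/-!
The d-space axioms for `dDPaths Dd` are local conditions on a path, so they survive monotone
reparametrization and, at the junction point `1/2` of a concatenation, the gluing of two monotone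
pieces. A set of paths closed under reparametrization lies in its saturation: clamping to a small
interval `[a, b]` around `t` turns `p` into a directed path with image in `U`. Conversely each
`c ∈ Dd U` is a directed function for `dDPaths Dd`, because a function that is locally
non-decreasing on the connected interval `I` is non-decreasing; hence a weakly directed path lies
in `dDPaths Dd`.
-/

def IsLocallyMonotoneOn {α β : Type*} [TopologicalSpace α] [Preorder α] [Preorder β]
    (f : α → β) (S : Set α) : Prop :=
  ∀ t ∈ S, ∃ V ∈ 𝓝 t, V ⊆ S ∧ MonotoneOn f V

section Preorder

variable {α β γ : Type*} [TopologicalSpace α] [Preorder α] [Preorder β] {f g : α → β}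
  {S S' T : Set α}

lemma IsLocallyMonotoneOn.comp_monotone [TopologicalSpace γ] [Preorder γ]
    (hf : IsLocallyMonotoneOn f S) {φ : γ → α} (hφ : Continuous φ) (hφm : Monotone φ) :
    IsLocallyMonotoneOn (f ∘ φ) (φ ⁻¹' S) := by
  intro t ht
  obtain ⟨V, hV, hVS, hfV⟩ := hf (φ t) ht
  exact ⟨φ ⁻¹' V, hφ.continuousAt.preimage_mem_nhds hV, preimage_mono hVS,
    fun a ha b hb hab ↦ hfV ha hb (hφm hab)⟩

lemma IsLocallyMonotoneOn.exists_inter_of_eqOn (hg : IsLocallyMonotoneOn g S)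
    (hfg : EqOn f g T) (hS : S' ∩ T = S ∩ T) {t : α} (ht : t ∈ S' ∩ T) :
    ∃ V ∈ 𝓝 t, V ∩ T ⊆ S' ∧ MonotoneOn f (V ∩ T) := by
  obtain ⟨V, hV, hVS, hgV⟩ := hg t (hS.le ht).1
  refine ⟨V, hV, fun u hu ↦ (hS.ge ⟨hVS hu.1, hu.2⟩).1, ?_⟩
  intro a ha b hb hab
  rw [hfg ha.2, hfg hb.2]
  exact hgV ha.1 hb.1 hab

end Preorder

section LinearOrder

variable {α β : Type*} [LinearOrder α] [Preorder β] {f : α → β}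

lemma monotoneOn_uIcc_trans {x y z : α} (hxy : MonotoneOn f (uIcc x y))
    (hyz : MonotoneOn f (uIcc y z)) : MonotoneOn f (uIcc x z) := by
  refine MonotoneOn.mono ?_ (uIcc_subset_uIcc_union_uIcc (b := y))
  rcases le_total x y with hxy' | hyx' <;> rcases le_total y z with hyz' | hzy'
  · rw [uIcc_of_le hxy', uIcc_of_le hyz'] at *
    exact hxy.union_right hyz (isGreatest_Icc hxy') (isLeast_Icc hyz')
  · rw [uIcc_of_le hxy', uIcc_of_ge hzy'] at *
    rcases le_total x z with hxz | hzx
    · rwa [union_eq_left.2 (Icc_subset_Icc_left hxz)]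
    · rwa [union_eq_right.2 (Icc_subset_Icc_left hzx)]
  · rw [uIcc_of_ge hyx', uIcc_of_le hyz'] at *
    rcases le_total x z with hxz | hzx
    · rwa [union_eq_right.2 (Icc_subset_Icc_right hxz)]
    · rwa [union_eq_left.2 (Icc_subset_Icc_right hzx)]
  · rw [uIcc_of_ge hyx', uIcc_of_ge hzy', union_comm] at *
    exact hyz.union_right hxy (isGreatest_Icc hzy') (isLeast_Icc hyx')

variable [TopologicalSpace α]

lemma IsLocallyMonotoneOn.monotone [OrderTopology α] [PreconnectedSpace α]
    (h : IsLocallyMonotoneOn f univ) : Monotone f := by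
  have key : ∀ x y : α, MonotoneOn f (uIcc x y) := by
    refine PreconnectedSpace.induction₂' _ (fun x ↦ ?_)
      ⟨fun x y z ↦ monotoneOn_uIcc_trans⟩
    obtain ⟨V, hV, -, hfV⟩ := h x (mem_univ x)
    obtain ⟨a, b, hx, hab, habV⟩ := exists_Icc_mem_subset_of_mem_nhds hV
    filter_upwards [hab] with y hy
    have hfy : MonotoneOn f (uIcc x y) := hfV.mono ((uIcc_subset_Icc hx hy).trans habV)
    exact ⟨hfy, uIcc_comm x y ▸ hfy⟩
  intro x y hxy
  exact key x y left_mem_uIcc right_mem_uIcc hxy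

lemma isLocallyMonotoneOn_of_Iic_Ici [OrderClosedTopology α] {S : Set α} {s : α}
    (hle : ∀ t ∈ S ∩ Iic s, ∃ V ∈ 𝓝 t, V ∩ Iic s ⊆ S ∧ MonotoneOn f (V ∩ Iic s))
    (hge : ∀ t ∈ S ∩ Ici s, ∃ V ∈ 𝓝 t, V ∩ Ici s ⊆ S ∧ MonotoneOn f (V ∩ Ici s)) :
    IsLocallyMonotoneOn f S := by
  intro t ht
  rcases lt_trichotomy t s with hts | rfl | hst
  · obtain ⟨V, hV, hVS, hfV⟩ := hle t ⟨ht, hts.le⟩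
    have hsub : V ∩ Iio s ⊆ V ∩ Iic s := inter_subset_inter_right _ Iio_subset_Iic_self
    exact ⟨V ∩ Iio s, Filter.inter_mem hV (Iio_mem_nhds hts), hsub.trans hVS, hfV.mono hsub⟩
  · obtain ⟨V₁, hV₁, hV₁S, hfV₁⟩ := hle t ⟨ht, le_rfl⟩
    obtain ⟨V₂, hV₂, hV₂S, hfV₂⟩ := hge t ⟨ht, le_rfl⟩
    have hsplit : V₁ ∩ V₂ = (V₁ ∩ V₂ ∩ Iic t) ∪ (V₁ ∩ V₂ ∩ Ici t) := by
      rw [← inter_union_distrib_left, Iic_union_Ici, inter_univ]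
    have ht₁₂ : t ∈ V₁ ∩ V₂ := ⟨mem_of_mem_nhds hV₁, mem_of_mem_nhds hV₂⟩
    refine ⟨V₁ ∩ V₂, Filter.inter_mem hV₁ hV₂, ?_, ?_⟩
    · rw [hsplit]
      exact union_subset (fun u hu ↦ hV₁S ⟨hu.1.1, hu.2⟩) (fun u hu ↦ hV₂S ⟨hu.1.2, hu.2⟩)
    · rw [hsplit]
      refine MonotoneOn.union_right (c := t) ?_ ?_ ⟨⟨ht₁₂, le_rfl⟩, fun u hu ↦ hu.2⟩
        ⟨⟨ht₁₂, le_rfl⟩, fun u hu ↦ hu.2⟩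
      · exact hfV₁.mono fun u hu ↦ ⟨hu.1.1, hu.2⟩
      · exact hfV₂.mono fun u hu ↦ ⟨hu.1.2, hu.2⟩
  · obtain ⟨V, hV, hVS, hfV⟩ := hge t ⟨ht, hst.le⟩
    have hsub : V ∩ Ioi s ⊆ V ∩ Ici s := inter_subset_inter_right _ Ioi_subset_Ici_self
    exact ⟨V ∩ Ioi s, Filter.inter_mem hV (Ioi_mem_nhds hst), hsub.trans hVS, hfV.mono hsub⟩

end LinearOrder

namespace unitInterval

noncomputable def doubleLeft : C(I, I) :=
  ⟨fun t ↦ projIcc 0 1 zero_le_one (2 * (t : ℝ)), continuous_projIcc.comp (by fun_prop)⟩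

noncomputable def doubleRight : C(I, I) :=
  ⟨fun t ↦ projIcc 0 1 zero_le_one (2 * (t : ℝ) - 1), continuous_projIcc.comp (by fun_prop)⟩

lemma monotone_doubleLeft : Monotone doubleLeft :=
  (monotone_projIcc zero_le_one).comp fun a b (hab : (a : ℝ) ≤ b) ↦ by linarith

lemma monotone_doubleRight : Monotone doubleRight :=
  (monotone_projIcc zero_le_one).comp fun a b (hab : (a : ℝ) ≤ b) ↦ by linarith

noncomputable def half : I := ⟨1 / 2, by norm_num, by norm_num⟩

end unitInterval

section Paths

variable {X : Type*} [TopologicalSpace X]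

lemma concatPath_eqOn_Iic_s6 (p q : C(I, X)) (h : p 1 = q 0) :
    EqOn (concatPath p q h) (p.comp doubleLeft) (Iic half) := by
  intro t (ht : (t : ℝ) ≤ 1 / 2)
  rw [concatPath, Path.coe_toContinuousMap, Path.trans_apply, dif_pos ht]
  exact congrArg p (projIcc_of_mem zero_le_one _).symm

lemma concatPath_eqOn_Ici_s6 (p q : C(I, X)) (h : p 1 = q 0) :
    EqOn (concatPath p q h) (q.comp doubleRight) (Ici half) := by
  intro t (ht : 1 / 2 ≤ (t : ℝ))
  rcases ht.eq_or_lt with ht | ht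
  · rw [concatPath_eqOn_Iic_s6 p q h ht.ge]
    have h₁ : doubleLeft t = 1 := by ext; simp [doubleLeft, ← ht]
    have h₂ : doubleRight t = 0 := by ext; simp [doubleRight, ← ht]
    simp [h₁, h₂, h]
  rw [concatPath, Path.coe_toContinuousMap, Path.trans_apply, dif_neg ht.not_ge]
  exact congrArg q (projIcc_of_mem zero_le_one _).symm

lemma mem_dDPaths_iff {Dd : Set X → Set (X → I)} {p : C(I, X)} :
    p ∈ dDPaths Dd ↔ ∀ U, IsOpen U → ∀ c ∈ Dd U, IsLocallyMonotoneOn (c ∘ p) (p ⁻¹' U) :=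
  Iff.rfl

lemma subset_satPaths {d : Set C(I, X)}
    (hd : ∀ p ∈ d, ∀ φ : C(I, I), Monotone φ → p.comp φ ∈ d) : d ⊆ satPaths d := by
  intro p hp U hU c hc t ht
  obtain ⟨a, b, hab, habN, habU⟩ :=
    exists_Icc_mem_subset_of_mem_nhds ((hU.preimage p.continuous).mem_nhds ht)
  refine ⟨Icc a b, habN, habU, fun u hu v hv huv ↦ ?_⟩
  let φ : C(I, I) := ⟨fun s ↦ max a (min b s), by fun_prop⟩
  have hφ : Monotone φ := fun s s' hs ↦ max_le_max le_rfl (min_le_min le_rfl hs)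
  have hφ_Icc : ∀ s ∈ Icc a b, φ s = s := fun s hs ↦ by
    simp [φ, min_eq_right hs.2, max_eq_right hs.1]
  have hrange : range (p.comp φ) ⊆ U := by
    rintro _ ⟨s, rfl⟩
    exact habU ⟨le_max_left _ _, max_le (hab.1.trans hab.2) (min_le_left _ _)⟩
  simpa [hφ_Icc u hu, hφ_Icc v hv] using hc.2 _ (hd p hp φ hφ) hrange (hφ huv)

variable {Dd : Set X → Set (X → I)}

lemma const_mem_dDPaths (x : X) : ContinuousMap.const I x ∈ dDPaths Dd :=
  fun _ _ _ _ _ ht ↦ ⟨univ, Filter.univ_mem, fun _ _ ↦ ht, fun _ _ _ _ _ ↦ le_rfl⟩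

lemma comp_mem_dDPaths {p : C(I, X)} (hp : p ∈ dDPaths Dd) {φ : C(I, I)} (hφ : Monotone φ) :
    p.comp φ ∈ dDPaths Dd :=
  mem_dDPaths_iff.2 fun U hU c hc ↦
    (mem_dDPaths_iff.1 hp U hU c hc).comp_monotone φ.continuous hφ

lemma mem_dDPaths_of_eqOn_Iic_Ici {p q r : C(I, X)} {s : I} (hp : p ∈ dDPaths Dd)
    (hq : q ∈ dDPaths Dd) (hrp : EqOn r p (Iic s)) (hrq : EqOn r q (Ici s)) :
    r ∈ dDPaths Dd := by
  refine mem_dDPaths_iff.2 fun U hU c hc ↦ ?_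
  have hpre {p' : C(I, X)} {T : Set I} (h : EqOn r p' T) : r ⁻¹' U ∩ T = p' ⁻¹' U ∩ T := by
    ext u
    exact and_congr_left fun hu ↦ by rw [mem_preimage, mem_preimage, h hu]
  exact isLocallyMonotoneOn_of_Iic_Ici
    (fun t ↦ (mem_dDPaths_iff.1 hp U hU c hc).exists_inter_of_eqOn
      (fun u hu ↦ congrArg c (hrp hu)) (hpre hrp))
    (fun t ↦ (mem_dDPaths_iff.1 hq U hU c hc).exists_inter_of_eqOn
      (fun u hu ↦ congrArg c (hrq hu)) (hpre hrq))

lemma concatPath_mem_dDPaths {p q : C(I, X)} (hp : p ∈ dDPaths Dd) (hq : q ∈ dDPaths Dd)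
    (h : p 1 = q 0) : concatPath p q h ∈ dDPaths Dd :=
  mem_dDPaths_of_eqOn_Iic_Ici (comp_mem_dDPaths hp monotone_doubleLeft)
    (comp_mem_dDPaths hq monotone_doubleRight) (concatPath_eqOn_Iic_s6 p q h)
    (concatPath_eqOn_Ici_s6 p q h)

lemma isDirectedFn_dDPaths {U : Set X} (hU : IsOpen U) {c : X → I} (hc : c ∈ Dd U)
    (hcU : ContinuousOn c U) : IsDirectedFn (dDPaths Dd) U c := by
  refine ⟨hcU, fun q hq hqU ↦ IsLocallyMonotoneOn.monotone ?_⟩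
  simpa only [preimage_eq_univ_iff.2 hqU] using mem_dDPaths_iff.1 hq U hU c hc

lemma satPaths_dDPaths_subset (hcont : ∀ U : Set X, IsOpen U → ∀ c ∈ Dd U, ContinuousOn c U) :
    satPaths (dDPaths Dd) ⊆ dDPaths Dd :=
  fun _ hp U hU c hc ↦ hp U hU c (isDirectedFn_dDPaths hU hc (hcont U hU c hc))

end Paths

theorem stmt_6_general {X : Type*} [TopologicalSpace X] (Dd : Set X → Set (X → unitInterval))
    (hcont : ∀ U : Set X, IsOpen U → ∀ c ∈ Dd U, ContinuousOn c U) :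
    (∀ x : X, ContinuousMap.const unitInterval x ∈ dDPaths Dd) ∧
    (∀ p ∈ dDPaths Dd, ∀ q ∈ dDPaths Dd, ∀ h : p 1 = q 0,
      concatPath p q h ∈ dDPaths Dd) ∧
    (∀ p ∈ dDPaths Dd, ∀ φ : C(unitInterval, unitInterval), Monotone ⇑φ →
      p.comp φ ∈ dDPaths Dd) ∧
    IsSaturated (dDPaths Dd) :=
  ⟨const_mem_dDPaths, fun _ hp _ hq h ↦ concatPath_mem_dDPaths hp hq h,
    fun _ hp _ hφ ↦ comp_mem_dDPaths hp hφ,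
    (satPaths_dDPaths_subset hcont).antisymm
      (subset_satPaths fun _ hp _ hφ ↦ comp_mem_dDPaths hp hφ)⟩

/-- Given, for each open `U ⊆ X`, a set `Dd U` of continuous `I`-valued functions on
`U`, stable under restriction to smaller opens, the set `dDPaths Dd` of paths along
which all these functions are locally non-decreasing is a saturated d-space structure
on `X`. -/
theorem stmt_6 {X : Type*} [TopologicalSpace X] (Dd : Set X → Set (X → unitInterval))
    (hcont : ∀ U : Set X, IsOpen U → ∀ c ∈ Dd U, ContinuousOn c U)
    (hres : ∀ U U' : Set X, IsOpen U → IsOpen U' → U' ⊆ U → ∀ c ∈ Dd U, c ∈ Dd U') :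
    (∀ x : X, ContinuousMap.const unitInterval x ∈ dDPaths Dd) ∧
    (∀ p ∈ dDPaths Dd, ∀ q ∈ dDPaths Dd, ∀ h : p 1 = q 0,
      concatPath p q h ∈ dDPaths Dd) ∧
    (∀ p ∈ dDPaths Dd, ∀ φ : C(unitInterval, unitInterval), Monotone ⇑φ →
      p.comp φ ∈ dDPaths Dd) ∧
    IsSaturated (dDPaths Dd) :=
  stmt_6_general Dd hcont
end

section
/- Equip I × I with the d-space structure whose directed paths are the continuous maps p : I → I × I both of whose coordinate projections are non-decreasing (this is the product I↑ × I↑ of two directed intervals). For an open subset U ⊆ I × I, a continuous map c : U → I is a directed function on U if and only if c is locally non-decreasing for the componentwise (product) order, i.e., every x ∈ U has a neighborhood V ⊆ U such that for all y, z ∈ V with y ≤ z componentwise one has c(y) ≤ c(z). -/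
open unitInterval Topology Set

/-- The product `I↑ × I↑` of two directed intervals: directed paths in `I × I`
are the continuous paths both of whose coordinate projections are non-decreasing. -/
def dIupSq : Set C(unitInterval, unitInterval × unitInterval) :=
  {p | Monotone (fun t => (p t).1) ∧ Monotone (fun t => (p t).2)}

/-!
Directed paths of `I↑ × I↑` are exactly the monotone paths. For `y ≤ z`, clamping the diagonal
`t ↦ (t, t)` to the box `[y, z]` gives a directed path from `y` to `z` inside that box, so a
directed function is monotone on every order-convex subset of `U`, and small boxes form a
neighbourhood basis of `I × I`. Conversely, along a directed path `p` the map `c ∘ p` is continuous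
and locally monotone on `I`, hence monotone by continuous induction.
-/

theorem exists_Icc_mem_nhds_subset_prod {α β : Type*} [LinearOrder α] [TopologicalSpace α]
    [OrderTopology α] [LinearOrder β] [TopologicalSpace β] [OrderTopology β] {x : α × β}
    {s : Set (α × β)} (hs : s ∈ 𝓝 x) : ∃ a b, Icc a b ∈ 𝓝 x ∧ Icc a b ⊆ s := by
  obtain ⟨A, hA, B, hB, hAB⟩ := mem_nhds_prod_iff.1 hs
  obtain ⟨a₁, b₁, -, hIcc₁, hsub₁⟩ := exists_Icc_mem_subset_of_mem_nhds hA
  obtain ⟨a₂, b₂, -, hIcc₂, hsub₂⟩ := exists_Icc_mem_subset_of_mem_nhds hB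
  refine ⟨(a₁, a₂), (b₁, b₂), ?_, ?_⟩ <;> rw [← Icc_prod_Icc]
  · exact prod_mem_nhds hIcc₁ hIcc₂
  · exact (prod_mono hsub₁ hsub₂).trans hAB

theorem monotone_of_forall_exists_monotoneOn_nhds {α β : Type*}
    [ConditionallyCompleteLinearOrder α] [TopologicalSpace α] [OrderTopology α]
    [DenselyOrdered α] [Preorder β] [TopologicalSpace β] [OrderClosedTopology β] {f : α → β}
    (hf : Continuous f) (hloc : ∀ x, ∃ W ∈ 𝓝 x, MonotoneOn f W) : Monotone f := by
  intro a b hab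
  suffices Icc a b ⊆ {t | f a ≤ f t} from this ⟨hab, le_rfl⟩
  refine IsClosed.Icc_subset_of_forall_mem_nhdsWithin
    ((isClosed_le continuous_const hf).inter isClosed_Icc) le_rfl ?_
  rintro x ⟨hax, -⟩
  obtain ⟨W, hW, hmono⟩ := hloc x
  filter_upwards [nhdsWithin_le_nhds hW, self_mem_nhdsWithin] with t htW hxt
  exact hax.trans (hmono (mem_of_mem_nhds hW) htW (le_of_lt hxt))

theorem mem_dIupSq_iff {p : C(I, I × I)} : p ∈ dIupSq ↔ Monotone p :=
  ⟨fun h _ _ hst => ⟨h.1 hst, h.2 hst⟩, fun h => ⟨monotone_fst.comp h, monotone_snd.comp h⟩⟩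

def clampPath (y z : I × I) : C(I, I × I) where
  toFun t := (max y.1 (min z.1 t), max y.2 (min z.2 t))

theorem clampPath_mem_dIupSq (y z : I × I) : clampPath y z ∈ dIupSq :=
  mem_dIupSq_iff.2 fun _ _ hst =>
    ⟨max_le_max le_rfl (min_le_min le_rfl hst), max_le_max le_rfl (min_le_min le_rfl hst)⟩

theorem clampPath_zero (y z : I × I) : clampPath y z 0 = y := by
  simp [clampPath]

theorem clampPath_one {y z : I × I} (h : y ≤ z) : clampPath y z 1 = z := by
  have h₁ : min z.1 1 = z.1 := min_eq_left le_one'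
  have h₂ : min z.2 1 = z.2 := min_eq_left le_one'
  simp [clampPath, h₁, h₂, h.1, h.2]

theorem range_clampPath_subset {y z : I × I} (h : y ≤ z) : range (clampPath y z) ⊆ Icc y z := by
  rintro _ ⟨t, rfl⟩
  exact ⟨⟨le_max_left _ _, le_max_left _ _⟩,
    ⟨max_le h.1 (min_le_left _ _), max_le h.2 (min_le_left _ _)⟩⟩

theorem IsDirectedFn.monotoneOn_of_ordConnected {U V : Set (I × I)} {c : I × I → I}
    (hc : IsDirectedFn dIupSq U c) (hV : V.OrdConnected) (hVU : V ⊆ U) : MonotoneOn c V := by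
  intro y hy z hz hyz
  have hrange : range (clampPath y z) ⊆ U :=
    (range_clampPath_subset hyz).trans ((hV.out hy hz).trans hVU)
  simpa [clampPath_zero, clampPath_one hyz] using
    hc.2 _ (clampPath_mem_dIupSq y z) hrange (zero_le_one' I)

theorem isDirectedFn_dIupSq_of_forall_exists_monotoneOn {U : Set (I × I)} {c : I × I → I}
    (hc : ContinuousOn c U) (hloc : ∀ x ∈ U, ∃ V ∈ 𝓝 x, MonotoneOn c V) :
    IsDirectedFn dIupSq U c := by
  refine ⟨hc, fun p hp hpU => ?_⟩
  have hpU' : ∀ t, p t ∈ U := fun t => hpU (mem_range_self t)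
  refine monotone_of_forall_exists_monotoneOn_nhds (hc.comp_continuous p.continuous hpU')
    fun t => ?_
  obtain ⟨V, hV, hmono⟩ := hloc (p t) (hpU' t)
  exact ⟨p ⁻¹' V, p.continuous.continuousAt.preimage_mem_nhds hV,
    fun _ hs _ hs' hss => hmono hs hs' (mem_dIupSq_iff.1 hp hss)⟩

/-- On the product `I↑ × I↑` of two directed intervals, a continuous function
`c : U → I` on an open `U ⊆ I × I` is a directed function iff it is locally
non-decreasing for the componentwise order. -/
theorem stmt_8 (U : Set (unitInterval × unitInterval)) (hU : IsOpen U)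
    (c : unitInterval × unitInterval → unitInterval) (hc : ContinuousOn c U) :
    IsDirectedFn dIupSq U c ↔ ∀ x ∈ U, ∃ V ∈ 𝓝 x, V ⊆ U ∧ MonotoneOn c V := by
  refine ⟨fun hdir x hx => ?_, fun hloc => ?_⟩
  · obtain ⟨a, b, hnhds, hsub⟩ := exists_Icc_mem_nhds_subset_prod (hU.mem_nhds hx)
    exact ⟨Icc a b, hnhds, hsub, hdir.monotoneOn_of_ordConnected ordConnected_Icc hsub⟩
  · refine isDirectedFn_dIupSq_of_forall_exists_monotoneOn hc fun x hx => ?_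
    obtain ⟨V, hV, -, hmono⟩ := hloc x hx
    exact ⟨V, hV, hmono⟩
end

section
/- Let π : ℝ → ℝ/ℤ be the quotient map onto the circle ℝ/ℤ (with the quotient topology), and let d be the set of paths p : I → ℝ/ℤ of the form p = π ∘ q for some continuous non-decreasing map q : I → ℝ. Then (ℝ/ℤ, d) is a d-space (the directed circle), and it is saturated: every weakly directed path of (ℝ/ℤ, d) belongs to d. -/
/-!
A continuous lift `w : I → ℝ` of a weakly directed path exists by path lifting for the covering
`ℝ → ℝ/ℤ`, and it is locally monotone: near `t`, the angle coordinate measured from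
`w t - 1/2` is a directed function on the circle minus one point, and along `w` it differs
from `w` by an integer that is constant on connected sets. A continuous, locally monotone
function on `I` is monotone. Conversely a directed path is weakly directed, because its
restriction to `[x, y]` (precomposition with the clamp `I → [x, y]`) is again directed.
-/

open unitInterval Topology Set

/-- The directed circle: paths in `ℝ/ℤ` of the form `π ∘ q` for some continuous
non-decreasing `q : I → ℝ`, where `π : ℝ → ℝ/ℤ` is the quotient map. -/
def dCircle : Set C(unitInterval, AddCircle (1 : ℝ)) :=
  {p | ∃ q : unitInterval → ℝ, Continuous q ∧ Monotone q ∧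
    ∀ t, p t = (q t : AddCircle (1 : ℝ))}

theorem Continuous.monotone_of_locally_monotoneOn {α β : Type*}
    [ConditionallyCompleteLinearOrder α] [TopologicalSpace α] [OrderTopology α] [DenselyOrdered α]
    [Preorder β] [TopologicalSpace β] [ClosedIciTopology β] {f : α → β} (hf : Continuous f)
    (hloc : ∀ t, ∃ V ∈ 𝓝 t, MonotoneOn f V) : Monotone f := by
  intro x y hxy
  have hS : Icc x y ⊆ {z | f x ≤ f z} := by
    refine ((isClosed_Ici.preimage hf).inter isClosed_Icc).Icc_subset_of_forall_mem_nhdsWithin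
      le_rfl fun z hz => ?_
    obtain ⟨V, hV, hfV⟩ := hloc z
    filter_upwards [self_mem_nhdsWithin, mem_nhdsWithin_of_mem_nhds hV] with w hzw hw
    exact le_trans hz.1 (hfV (mem_of_mem_nhds hV) hw (le_of_lt hzw))
  exact hS ⟨hxy, le_rfl⟩

theorem Path.monotone_trans {X : Type*} [TopologicalSpace X] [Preorder X] {x y z : X}
    {γ : Path x y} {γ' : Path y z} (hγ : Monotone γ) (hγ' : Monotone γ') :
    Monotone (γ.trans γ') := by
  intro s t hst
  have hst' : (s : ℝ) ≤ t := hst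
  simp only [Path.trans_apply]
  split_ifs with hs ht ht
  · exact hγ (Subtype.mk_le_mk.mpr (by linarith))
  · calc γ _ ≤ γ 1 := hγ le_one'
      _ = γ' 0 := by simp
      _ ≤ γ' _ := hγ' nonneg'
  · exact absurd (hst'.trans ht) hs
  · exact hγ' (Subtype.mk_le_mk.mpr (by linarith))

theorem subset_satPaths_of_comp_mem {X : Type*} [TopologicalSpace X] {d : Set C(I, X)}
    (hd : ∀ p ∈ d, ∀ φ : C(I, I), Monotone ⇑φ → p.comp φ ∈ d) : d ⊆ satPaths d := by
  intro p hp U hU c hc t ht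
  refine ⟨ordConnectedComponent (p ⁻¹' U) t,
    ordConnectedComponent_mem_nhds.2 ((hU.preimage p.continuous).mem_nhds ht),
    ordConnectedComponent_subset, fun x hx y hy hxy => ?_⟩
  let φ : C(I, I) :=
    ⟨fun s => projIcc x y hxy s, continuous_subtype_val.comp continuous_projIcc⟩
  have hφ : Monotone φ := fun s s' h => Subtype.coe_le_coe.2 (monotone_projIcc hxy h)
  have hrange : range (p.comp φ) ⊆ U := by
    rintro _ ⟨s, rfl⟩
    have hs : (projIcc x y hxy s : I) ∈ ordConnectedComponent (p ⁻¹' U) t :=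
      OrdConnected.out inferInstance hx hy (projIcc x y hxy s).2
    exact (ordConnectedComponent_subset hs : _ ∈ p ⁻¹' U)
  simpa [φ, projIcc_left, projIcc_right] using hc.2 _ (hd p hp φ hφ) hrange hxy

theorem const_mem_dCircle (x : AddCircle (1 : ℝ)) : ContinuousMap.const I x ∈ dCircle := by
  obtain ⟨x₀, rfl⟩ := QuotientAddGroup.mk_surjective x
  exact ⟨fun _ => x₀, continuous_const, monotone_const, fun _ => rfl⟩

theorem comp_mem_dCircle {p : C(I, AddCircle (1 : ℝ))} (hp : p ∈ dCircle)
    (φ : C(I, I)) (hφ : Monotone φ) : p.comp φ ∈ dCircle := by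
  obtain ⟨w, hwc, hwm, hpw⟩ := hp
  exact ⟨w ∘ φ, hwc.comp φ.continuous, hwm.comp hφ, fun t => hpw (φ t)⟩

theorem concatPath_mem_dCircle {p q : C(I, AddCircle (1 : ℝ))} (hp : p ∈ dCircle)
    (hq : q ∈ dCircle) (h : p 1 = q 0) : concatPath p q h ∈ dCircle := by
  obtain ⟨w₁, hw₁c, hw₁m, hpw₁⟩ := hp
  obtain ⟨w₂, hw₂c, hw₂m, hqw₂⟩ := hq
  set k := w₁ 1 - w₂ 0 with hk
  have hqw₂' : ∀ s, q s = ((w₂ s + k : ℝ) : AddCircle (1 : ℝ)) := fun s => by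
    rw [QuotientAddGroup.mk_add, hk, QuotientAddGroup.mk_sub, ← hpw₁, ← hqw₂, h, ← hqw₂,
      sub_self, add_zero]
  let γ₁ : Path (w₁ 0) (w₁ 1) := ⟨⟨w₁, hw₁c⟩, rfl, rfl⟩
  let γ₂ : Path (w₁ 1) (w₂ 1 + k) :=
    ⟨⟨fun s => w₂ s + k, by fun_prop⟩, by simp [hk], rfl⟩
  refine ⟨γ₁.trans γ₂, (γ₁.trans γ₂).continuous,
    Path.monotone_trans hw₁m fun s t hst => add_le_add_left (hw₂m hst) k, fun t => ?_⟩
  simp only [concatPath, Path.coe_toContinuousMap, Path.trans_apply]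
  split_ifs
  exacts [hpw₁ _, hqw₂' _]

noncomputable def arcCoord (a : ℝ) (y : AddCircle (1 : ℝ)) : I :=
  projIcc 0 1 zero_le_one (AddCircle.equivIco 1 a y - a)

theorem arcCoord_coe (a x : ℝ) : (arcCoord a x : ℝ) = toIcoMod one_pos a x - a := by
  have h := toIcoMod_mem_Ico one_pos a x
  rw [arcCoord, AddCircle.equivIco, QuotientAddGroup.equivIcoMod_coe,
    projIcc_of_mem _ ⟨by linarith [h.1], by linarith [h.2]⟩]

theorem continuousAt_arcCoord {a : ℝ} {y : AddCircle (1 : ℝ)} (hy : y ≠ a) :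
    ContinuousAt (arcCoord a) y :=
  continuous_projIcc.continuousAt.comp <|
    (continuous_subtype_val.continuousAt.comp (AddCircle.continuousAt_equivIco 1 a hy)).sub
      continuousAt_const

theorem toIcoDiv_eq_of_isPreconnected {X : Type*} [TopologicalSpace X] {S : Set X}
    (hS : IsPreconnected S) {w : X → ℝ} (hw : ContinuousOn w S) {a : ℝ}
    (ha : ∀ s ∈ S, (w s : AddCircle (1 : ℝ)) ≠ a) {x y : X} (hx : x ∈ S) (hy : y ∈ S) :
    toIcoDiv one_pos a (w x) = toIcoDiv one_pos a (w y) :=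
  hS.constant ((continuousOn_toIcoDiv one_pos a).comp hw
    fun s hs => AddCommGroup.not_modEq_iff_ne_mod_zmultiples.2 (ha s hs)) hx hy

theorem arcCoord_le_arcCoord_iff {X : Type*} [TopologicalSpace X] {S : Set X}
    (hS : IsPreconnected S) {w : X → ℝ} (hw : ContinuousOn w S) {a : ℝ}
    (ha : ∀ s ∈ S, (w s : AddCircle (1 : ℝ)) ≠ a) {x y : X} (hx : x ∈ S) (hy : y ∈ S) :
    arcCoord a (w x) ≤ arcCoord a (w y) ↔ w x ≤ w y := by
  rw [← Subtype.coe_le_coe, arcCoord_coe, arcCoord_coe, ← self_sub_toIcoDiv_zsmul,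
    ← self_sub_toIcoDiv_zsmul, toIcoDiv_eq_of_isPreconnected hS hw ha hx hy]
  simp only [sub_le_sub_iff_right]

theorem isDirectedFn_arcCoord (a : ℝ) :
    IsDirectedFn dCircle {(a : AddCircle (1 : ℝ))}ᶜ (arcCoord a) := by
  refine ⟨fun y hy => (continuousAt_arcCoord hy).continuousWithinAt, ?_⟩
  rintro p ⟨w, hwc, hwm, hpw⟩ hrange x y hxy
  have ha : ∀ s ∈ univ, (w s : AddCircle (1 : ℝ)) ≠ a :=
    fun s _ => hpw s ▸ hrange (mem_range_self s)
  simp only [Function.comp_apply, hpw]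
  exact (arcCoord_le_arcCoord_iff isPreconnected_univ hwc.continuousOn ha trivial trivial).2
    (hwm hxy)

theorem monotone_lift_of_isWeaklyDirected {p : C(I, AddCircle (1 : ℝ))}
    (hp : IsWeaklyDirected dCircle p) {w : I → ℝ} (hw : Continuous w)
    (hpw : ∀ t, p t = w t) : Monotone w := by
  refine Continuous.monotone_of_locally_monotoneOn hw fun t => ?_
  set a := w t - 1 / 2 with ha_def
  have hpt : p t ∈ ({(a : AddCircle (1 : ℝ))}ᶜ : Set (AddCircle (1 : ℝ))) := by
    rw [hpw, mem_compl_singleton_iff, Ne,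
      AddCircle.coe_eq_coe_iff_of_mem_Ico (a := a) ⟨by linarith, by linarith⟩
        ⟨le_rfl, by linarith⟩]
    linarith
  obtain ⟨V, hV, hVU, hmono⟩ := hp _ isOpen_compl_singleton _ (isDirectedFn_arcCoord a) t hpt
  refine ⟨ordConnectedComponent V t, ordConnectedComponent_mem_nhds.2 hV,
    fun x hx y hy hxy => ?_⟩
  have ha : ∀ s ∈ ordConnectedComponent V t, (w s : AddCircle (1 : ℝ)) ≠ a :=
    fun s hs => hpw s ▸ hVU (ordConnectedComponent_subset hs)
  refine (arcCoord_le_arcCoord_iff (OrdConnected.isPreconnected inferInstance) hw.continuousOn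
    ha hx hy).1 ?_
  simpa [hpw] using hmono (ordConnectedComponent_subset hx) (ordConnectedComponent_subset hy) hxy

theorem satPaths_dCircle_subset_dCircle : satPaths dCircle ⊆ dCircle := by
  intro p hp
  obtain ⟨x₀, hx₀⟩ := QuotientAddGroup.mk_surjective (p 0)
  obtain ⟨w, hw, -⟩ :=
    (AddCircle.isCoveringMap_coe (1 : ℝ)).exists_path_lifts p x₀ hx₀.symm
  have hpw : ∀ t, p t = w t := fun t => (congrFun hw t).symm
  exact ⟨w, w.continuous, monotone_lift_of_isWeaklyDirected hp w.continuous hpw, hpw⟩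

/-- The directed circle `(ℝ/ℤ, dCircle)` is a d-space, and it is saturated. -/
theorem stmt_11 :
    (∀ x : AddCircle (1 : ℝ), ContinuousMap.const unitInterval x ∈ dCircle) ∧
    (∀ p ∈ dCircle, ∀ q ∈ dCircle, ∀ h : p 1 = q 0, concatPath p q h ∈ dCircle) ∧
    (∀ p ∈ dCircle, ∀ φ : C(unitInterval, unitInterval), Monotone ⇑φ →
      p.comp φ ∈ dCircle) ∧
    IsSaturated dCircle :=
  ⟨const_mem_dCircle, fun _ hp _ hq h => concatPath_mem_dCircle hp hq h,
    fun _ hp φ hφ => comp_mem_dCircle hp φ hφ,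
    satPaths_dCircle_subset_dCircle.antisymm
      (subset_satPaths_of_comp_mem fun _ hp φ hφ => comp_mem_dCircle hp φ hφ)⟩
end

section
/- Let d be the set of continuous paths p : I → ℝ² that are finite concatenations of horizontal and vertical paths (i.e., concatenations of finitely many continuous paths each of which has constant first coordinate or constant second coordinate). Then (ℝ², d) is a d-space; for every open U ⊆ ℝ², every directed function c : U → I on U is locally constant; consequently every continuous path I → ℝ² is weakly directed, and (ℝ², d) is not saturated. -/
open unitInterval Topology Set

/-- `p` is a finite concatenation of horizontal and vertical paths: there is a
monotone partition `0 = τ 0 ≤ … ≤ τ n = 1` of `I` such that on each subinterval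
`[τ i, τ (i+1)]`, either the first or the second coordinate of `p` is constant. -/
def IsPiecewiseHV (p : C(unitInterval, ℝ × ℝ)) : Prop :=
  ∃ n : ℕ, ∃ τ : Fin (n + 1) → unitInterval, Monotone τ ∧ τ 0 = 0 ∧ τ (Fin.last n) = 1 ∧
    ∀ i : Fin n,
      (∀ s ∈ Set.Icc (τ i.castSucc) (τ i.succ), (p s).1 = (p (τ i.castSucc)).1) ∨
      (∀ s ∈ Set.Icc (τ i.castSucc) (τ i.succ), (p s).2 = (p (τ i.castSucc)).2)

/-- The plane with piecewise horizontal-or-vertical directed paths. -/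
def dHV : Set C(unitInterval, ℝ × ℝ) := {p | IsPiecewiseHV p}

/-!
Piecewise horizontal-or-vertical paths are chains of pieces, i.e. `ReflTransGen` of the
relation "`p` maps `[s, t]` into a horizontal or vertical line". Chains concatenate, and they
pull back along continuous monotone reparametrisations because breakpoints lift by the
intermediate value theorem; this gives the d-space axioms.

A directed function `c` is non-decreasing along every horizontal or vertical segment in `U`,
traversed in either direction, so it is constant on such segments; any two points of a ball
are joined inside it by two such segments, so `c` is locally constant. Then `c ∘ p` is locally
constant for every path `p`, so every path is weakly directed, while the diagonal `t ↦ (t, t)`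
has no non-degenerate horizontal or vertical piece and so is not directed.
-/

open Relation

section Piecewise

variable {α β X : Type*}

theorem Relation.reflTransGen_iff_exists_fin_chain {R : α → α → Prop} {a b : α} :
    ReflTransGen R a b ↔ ∃ n, ∃ τ : Fin (n + 1) → α, τ 0 = a ∧ τ (Fin.last n) = b ∧
      ∀ i : Fin n, R (τ i.castSucc) (τ i.succ) := by
  constructor
  · intro h
    induction h with
    | refl => exact ⟨0, fun _ => a, rfl, rfl, Fin.elim0⟩
    | @tail b c _ hbc ih =>
      obtain ⟨n, τ, h0, hlast, hτ⟩ := ih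
      refine ⟨n + 1, Fin.snoc τ c, by simpa using h0, Fin.snoc_last _ _, fun i => ?_⟩
      induction i using Fin.lastCases with
      | last => simpa [hlast] using hbc
      | cast i => rw [Fin.succ_castSucc, Fin.snoc_castSucc, Fin.snoc_castSucc]; exact hτ i
  · rintro ⟨n, τ, rfl, rfl, hτ⟩
    suffices ∀ k, ReflTransGen R (τ 0) (τ k) from this _
    intro k
    induction k using Fin.induction with
    | zero => exact .refl
    | succ i ih => exact ih.tail (hτ i)

/-- `ReflTransGen (IsPiece Q f) a b` says that `[a, b]` is cut into finitely many intervals on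
each of which the image of `f` has the property `Q`. -/
def IsPiece [Preorder α] (Q : Set X → Prop) (f : α → X) (b c : α) : Prop :=
  b ≤ c ∧ Q (f '' Icc b c)

theorem IsPiece.of_eqOn_comp [Preorder α] [Preorder β] {Q : Set X → Prop}
    (hQ : Antitone Q) {f : α → X} {g : β → X} {φ : α → β}
    {a b : α} {c d : β} (hab : a ≤ b) (hφ : MonotoneOn φ (Icc a b))
    (hf : EqOn f (g ∘ φ) (Icc a b)) (hc : c ≤ φ a) (hd : φ b ≤ d) (hg : Q (g '' Icc c d)) :
    IsPiece Q f a b := by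
  refine ⟨hab, hQ ?_ hg⟩
  rw [hf.image_eq, image_comp]
  exact image_mono (hφ.mapsTo_Icc.mono_right (Icc_subset_Icc hc hd)).image_subset

/-- By the intermediate value theorem each breakpoint of `g` in `[φ a, φ b]` is the image of
a breakpoint of `f`. -/
theorem Relation.ReflTransGen.isPiece_of_eqOn_comp
    [ConditionallyCompleteLinearOrder α] [TopologicalSpace α] [OrderTopology α]
    [DenselyOrdered α] [LinearOrder β] [TopologicalSpace β] [OrderClosedTopology β]
    {Q : Set X → Prop} (hQ : Antitone Q) (hQ₁ : ∀ x, Q {x})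
    {g : β → X} {c d : β} (hg : ReflTransGen (IsPiece Q g) c d) {f : α → X} {φ : α → β}
    {a b : α} (hab : a ≤ b) (hφ : MonotoneOn φ (Icc a b)) (hφc : ContinuousOn φ (Icc a b))
    (hf : EqOn f (g ∘ φ) (Icc a b)) (hc : c ≤ φ a) (hd : φ b ≤ d) :
    ReflTransGen (IsPiece Q f) a b := by
  induction hg generalizing b with
  | refl => exact .single (IsPiece.of_eqOn_comp hQ hab hφ hf hc hd (by simpa using hQ₁ (g c)))
  | @tail d' d _ hpiece ih =>
    by_cases hb : φ b ≤ d'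
    · exact ih hab hφ hφc hf hb
    by_cases ha : d' < φ a
    · exact .single (IsPiece.of_eqOn_comp hQ hab hφ hf ha.le hd hpiece.2)
    obtain ⟨b', hb', hφb'⟩ := intermediate_value_Icc hab hφc ⟨not_lt.1 ha, (not_le.1 hb).le⟩
    have hsub : Icc b' b ⊆ Icc a b := Icc_subset_Icc_left hb'.1
    have hsub' : Icc a b' ⊆ Icc a b := Icc_subset_Icc_right hb'.2
    exact (ih hb'.1 (hφ.mono hsub') (hφc.mono hsub') (hf.mono hsub') hφb'.le).tail
      (IsPiece.of_eqOn_comp hQ hb'.2 (hφ.mono hsub) (hf.mono hsub) hφb'.ge hd hpiece.2)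

theorem Relation.ReflTransGen.exists_isPiece_of_lt [Preorder α] {Q : Set X → Prop} {f : α → X}
    {a b : α} (h : ReflTransGen (IsPiece Q f) a b) (hab : a < b) :
    ∃ b' c', b' < c' ∧ Q (f '' Icc b' c') := by
  induction h with
  | refl => exact absurd hab (lt_irrefl a)
  | @tail c d _ hpiece ih =>
    by_cases hcd : c < d
    · exact ⟨c, d, hcd, hpiece.2⟩
    · exact ih (hab.trans_le (not_not.1 fun h => hcd (hpiece.1.lt_of_not_ge h)))

end Piecewise

def IsHV (A : Set (ℝ × ℝ)) : Prop :=
  (Prod.fst '' A).Subsingleton ∨ (Prod.snd '' A).Subsingleton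

theorem antitone_isHV : Antitone IsHV := fun _ _ hBA hA =>
  hA.imp (fun h => h.anti (image_mono hBA)) (fun h => h.anti (image_mono hBA))

theorem Set.Subsingleton.isHV {A : Set (ℝ × ℝ)} (hA : A.Subsingleton) : IsHV A :=
  .inl (hA.image _)

theorem isHV_singleton (x : ℝ × ℝ) : IsHV {x} :=
  subsingleton_singleton.isHV

theorem subsingleton_image_iff_of_mem {α β : Type*} {f : α → β} {s : Set α} {x : α}
    (hx : x ∈ s) : (f '' s).Subsingleton ↔ ∀ y ∈ s, f y = f x :=
  ⟨fun h _ hy => h (mem_image_of_mem f hy) (mem_image_of_mem f hx), by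
    rintro h _ ⟨y, hy, rfl⟩ _ ⟨z, hz, rfl⟩
    rw [h y hy, h z hz]⟩

theorem isHV_image_Icc_iff {α : Type*} [Preorder α] {p : α → ℝ × ℝ} {b c : α} (hbc : b ≤ c) :
    IsHV (p '' Icc b c) ↔
      (∀ s ∈ Icc b c, (p s).1 = (p b).1) ∨ (∀ s ∈ Icc b c, (p s).2 = (p b).2) := by
  simp only [IsHV, image_image, subsingleton_image_iff_of_mem (left_mem_Icc.2 hbc)]

theorem isHV_segment {a b : ℝ × ℝ} (hab : a.1 = b.1 ∨ a.2 = b.2) : IsHV (segment ℝ a b) := by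
  refine antitone_isHV (Prod.segment_subset a b) ?_
  rcases hab with h | h
  · exact .inl (subsingleton_singleton.anti
      ((fst_image_prod_subset _ _).trans (by rw [h, segment_same])))
  · exact .inr (subsingleton_singleton.anti
      ((snd_image_prod_subset _ _).trans (by rw [h, segment_same])))

theorem mem_dHV_iff {p : C(I, ℝ × ℝ)} : p ∈ dHV ↔ ReflTransGen (IsPiece IsHV p) 0 1 := by
  rw [reflTransGen_iff_exists_fin_chain]
  constructor
  · rintro ⟨n, τ, hτ, h0, h1, hpieces⟩
    have hle (i : Fin n) : τ i.castSucc ≤ τ i.succ := hτ i.castSucc_le_succ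
    exact ⟨n, τ, h0, h1, fun i => ⟨hle i, (isHV_image_Icc_iff (hle i)).2 (hpieces i)⟩⟩
  · rintro ⟨n, τ, h0, h1, hτ⟩
    exact ⟨n, τ, Fin.monotone_iff_le_succ.2 fun i => (hτ i).1, h0, h1,
      fun i => (isHV_image_Icc_iff (hτ i).1).1 (hτ i).2⟩

theorem mem_dHV_of_isHV_range {p : C(I, ℝ × ℝ)} (hp : IsHV (range p)) : p ∈ dHV :=
  mem_dHV_iff.2 (.single ⟨zero_le_one, antitone_isHV (image_subset_range _ _) hp⟩)

theorem reflTransGen_isPiece_of_mem_dHV {p : C(I, ℝ × ℝ)} (hp : p ∈ dHV) {f : I → ℝ × ℝ}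
    {φ : I → I} (hφ : Monotone φ) (hφc : Continuous φ) {a b : I} (hab : a ≤ b)
    (hf : EqOn f (p ∘ φ) (Icc a b)) : ReflTransGen (IsPiece IsHV f) a b :=
  (mem_dHV_iff.1 hp).isPiece_of_eqOn_comp antitone_isHV isHV_singleton hab (hφ.monotoneOn _)
    hφc.continuousOn hf bot_le le_top

theorem const_mem_dHV (x : ℝ × ℝ) : ContinuousMap.const I x ∈ dHV :=
  mem_dHV_of_isHV_range (subsingleton_singleton.anti range_const_subset).isHV

theorem comp_mem_dHV {p : C(I, ℝ × ℝ)} (hp : p ∈ dHV) {φ : C(I, I)} (hφ : Monotone φ) :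
    p.comp φ ∈ dHV :=
  mem_dHV_iff.2 (reflTransGen_isPiece_of_mem_dHV hp hφ φ.continuous zero_le_one fun _ _ => rfl)

theorem concatPath_apply_of_le_half {X : Type*} [TopologicalSpace X] (p q : C(I, X))
    (h : p 1 = q 0) {t : I} (ht : (t : ℝ) ≤ 1 / 2) :
    concatPath p q h t = p (projIcc 0 1 zero_le_one (2 * t)) := by
  rw [concatPath, Path.coe_toContinuousMap, ← Path.extend_extends',
    Path.extend_trans_of_le_half _ _ ht]
  rfl

theorem concatPath_apply_of_half_le {X : Type*} [TopologicalSpace X] (p q : C(I, X))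
    (h : p 1 = q 0) {t : I} (ht : 1 / 2 ≤ (t : ℝ)) :
    concatPath p q h t = q (projIcc 0 1 zero_le_one (2 * t - 1)) := by
  rw [concatPath, Path.coe_toContinuousMap, ← Path.extend_extends',
    Path.extend_trans_of_half_le _ _ ht]
  rfl

theorem concatPath_mem_dHV {p q : C(I, ℝ × ℝ)} (hp : p ∈ dHV) (hq : q ∈ dHV) (h : p 1 = q 0) :
    concatPath p q h ∈ dHV := by
  let m : I := ⟨1 / 2, by norm_num, by norm_num⟩
  have hleft : ReflTransGen (IsPiece IsHV (concatPath p q h)) 0 m :=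
    reflTransGen_isPiece_of_mem_dHV hp ((monotone_projIcc _).comp fun _ _ _ => by gcongr)
      (continuous_projIcc.comp (by fun_prop)) bot_le
      fun _ ht => concatPath_apply_of_le_half p q h ht.2
  have hright : ReflTransGen (IsPiece IsHV (concatPath p q h)) m 1 :=
    reflTransGen_isPiece_of_mem_dHV hq ((monotone_projIcc _).comp fun _ _ _ => by gcongr)
      (continuous_projIcc.comp (by fun_prop)) le_top
      fun _ ht => concatPath_apply_of_half_le p q h ht.1
  exact mem_dHV_iff.2 (hleft.trans hright)

theorem segment_mem_dHV {a b : ℝ × ℝ} (hab : a.1 = b.1 ∨ a.2 = b.2) :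
    (Path.segment a b).toContinuousMap ∈ dHV :=
  mem_dHV_of_isHV_range (by simpa [Path.range_segment] using isHV_segment hab)

theorem IsDirectedFn.le_of_segment_subset {U : Set (ℝ × ℝ)} {c : ℝ × ℝ → I}
    (hc : IsDirectedFn dHV U c) {a b : ℝ × ℝ} (hab : a.1 = b.1 ∨ a.2 = b.2)
    (hU : segment ℝ a b ⊆ U) : c a ≤ c b := by
  simpa using hc.2 _ (segment_mem_dHV hab) (by simpa [Path.range_segment] using hU)
    (zero_le_one : (0 : I) ≤ 1)

theorem IsDirectedFn.eq_of_segment_subset {U : Set (ℝ × ℝ)} {c : ℝ × ℝ → I}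
    (hc : IsDirectedFn dHV U c) {a b : ℝ × ℝ} (hab : a.1 = b.1 ∨ a.2 = b.2)
    (hU : segment ℝ a b ⊆ U) : c a = c b :=
  (hc.le_of_segment_subset hab hU).antisymm
    (hc.le_of_segment_subset (hab.imp Eq.symm Eq.symm) (segment_symm ℝ a b ▸ hU))

/-- A point `y` of a ball around `x` is joined to `x` inside the ball by a vertical segment
to `(y.1, x.2)` followed by a horizontal one. -/
theorem IsDirectedFn.exists_nhds_eq {U : Set (ℝ × ℝ)} (hU : IsOpen U) {c : ℝ × ℝ → I}
    (hc : IsDirectedFn dHV U c) {x : ℝ × ℝ} (hx : x ∈ U) :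
    ∃ V ∈ 𝓝 x, V ⊆ U ∧ ∀ y ∈ V, c y = c x := by
  obtain ⟨r, hr, hball⟩ := Metric.isOpen_iff.1 hU x hx
  refine ⟨Metric.ball x r, Metric.ball_mem_nhds x hr, hball, fun y hy => ?_⟩
  have hsub {a b} (ha : a ∈ Metric.ball x r) (hb : b ∈ Metric.ball x r) : segment ℝ a b ⊆ U :=
    ((convex_ball x r).segment_subset ha hb).trans hball
  have hz : (y.1, x.2) ∈ Metric.ball x r := by
    refine lt_of_le_of_lt ?_ (Metric.mem_ball.1 hy)
    rw [Prod.dist_eq, Prod.dist_eq, dist_self]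
    exact max_le_max le_rfl dist_nonneg
  calc c y = c (y.1, x.2) := hc.eq_of_segment_subset (.inl rfl) (hsub hy hz)
    _ = c x := hc.eq_of_segment_subset (.inr rfl) (hsub hz (Metric.mem_ball_self hr))

theorem isWeaklyDirected_dHV (p : C(I, ℝ × ℝ)) : IsWeaklyDirected dHV p := by
  intro U hU c hc t ht
  obtain ⟨V, hV, hVU, hcV⟩ := hc.exists_nhds_eq hU ht
  refine ⟨p ⁻¹' V, p.continuous.continuousAt.preimage_mem_nhds hV, preimage_mono hVU,
    fun u hu v hv _ => ?_⟩
  simp only [Function.comp_apply, hcV _ hu, hcV _ hv, le_rfl]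

theorem diagonal_not_mem_dHV :
    (⟨fun t => ((t : ℝ), (t : ℝ)), by fun_prop⟩ : C(I, ℝ × ℝ)) ∉ dHV := by
  intro h
  obtain ⟨b, c, hbc, hHV⟩ := (mem_dHV_iff.1 h).exists_isPiece_of_lt zero_lt_one
  rcases (isHV_image_Icc_iff hbc.le).1 hHV with h | h <;>
    exact hbc.ne' (Subtype.ext (h c (right_mem_Icc.2 hbc.le)))

theorem not_isSaturated_dHV : ¬ IsSaturated dHV := fun h =>
  diagonal_not_mem_dHV (h ▸ isWeaklyDirected_dHV _)

/-- `(ℝ², dHV)` is a d-space; its directed functions on any open `U` are locally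
constant; consequently every continuous path is weakly directed, and `(ℝ², dHV)`
is not saturated. -/
theorem stmt_12 :
    (∀ x : ℝ × ℝ, ContinuousMap.const unitInterval x ∈ dHV) ∧
    (∀ p ∈ dHV, ∀ q ∈ dHV, ∀ h : p 1 = q 0, concatPath p q h ∈ dHV) ∧
    (∀ p ∈ dHV, ∀ φ : C(unitInterval, unitInterval), Monotone ⇑φ → p.comp φ ∈ dHV) ∧
    (∀ U : Set (ℝ × ℝ), IsOpen U → ∀ c : ℝ × ℝ → unitInterval, IsDirectedFn dHV U c →
      ∀ x ∈ U, ∃ V ∈ 𝓝 x, V ⊆ U ∧ ∀ y ∈ V, c y = c x) ∧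
    (∀ p : C(unitInterval, ℝ × ℝ), IsWeaklyDirected dHV p) ∧
    ¬ IsSaturated dHV :=
  ⟨const_mem_dHV, fun _ hp _ hq h => concatPath_mem_dHV hp hq h,
    fun _ hp _ hφ => comp_mem_dHV hp hφ, fun _ hU _ hc _ hx => hc.exists_nhds_eq hU hx,
    isWeaklyDirected_dHV, not_isSaturated_dHV⟩
end

section
/- Let (X, dX) be a d-space and let p : I → X be a continuous path lying in the closure of dX inside the space C(I, X) of continuous maps I → X equipped with the compact-open topology. Then p is weakly directed. (Almost directed paths, i.e., compact-open limits of directed paths, are weakly directed.) -/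
open unitInterval Topology Set

/-!
Monotonicity of `c ∘ f` on a compact interval `K` mapped into an open set `U` is a closed
condition on `f ∈ C(I, X)`: its failure is witnessed by a strict inequality at two points of
`K`, which persists under compact-open perturbation since `c` is continuous on `U`. It holds
for directed paths (clamp time to `K` to get a directed path inside `U`), hence on their closure.
-/

open Filter

lemma isClosed_setOf_mapsTo_imp_monotoneOn {Y X β : Type*} [TopologicalSpace Y] [Preorder Y]
    [TopologicalSpace X] [LinearOrder β] [TopologicalSpace β] [OrderClosedTopology β]
    {K : Set Y} (hK : IsCompact K) {U : Set X} (hU : IsOpen U) {c : X → β}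
    (hc : ContinuousOn c U) :
    IsClosed {f : C(Y, X) | MapsTo f K U → MonotoneOn (c ∘ f) K} := by
  refine isOpen_compl_iff.mp (isOpen_iff_mem_nhds.mpr ?_)
  intro f hf
  simp only [mem_compl_iff, mem_ofPred_eq, Classical.not_imp, MonotoneOn, not_forall, not_le] at hf
  obtain ⟨hmaps, s, hs, s', hs', hss', hlt⟩ := hf
  have hcont : ∀ y ∈ K, ContinuousAt (fun g : C(Y, X) => c (g y)) f := fun y hy =>
    (hc.continuousAt (hU.mem_nhds (hmaps hy))).comp (f := fun g : C(Y, X) => g y)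
      (continuous_eval_const y).continuousAt
  filter_upwards [ContinuousMap.eventually_mapsTo hK hU hmaps,
    (hcont s' hs').eventually_lt (hcont s hs) hlt] with g hgK hglt
  exact fun hmono => (hmono hgK hs hs' hss').not_gt hglt

lemma IsDirectedFn.monotoneOn_of_mapsTo {X : Type*} [TopologicalSpace X] (D : DSpace X)
    {U : Set X} {c : X → I} (hc : IsDirectedFn D.d U c) {q : C(I, X)} (hq : q ∈ D.d)
    {a b : I} (hmaps : MapsTo q (Icc a b) U) : MonotoneOn (c ∘ q) (Icc a b) := by
  intro s hs s' hs' hss'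
  let clamp : C(I, I) := ⟨fun x => max a (min x b), by fun_prop⟩
  have hclamp_mono : Monotone clamp := fun x y hxy => max_le_max le_rfl (min_le_min_right b hxy)
  have hclamp_eq : ∀ x ∈ Icc a b, clamp x = x := fun x hx => by
    simp [clamp, min_eq_left hx.2, max_eq_right hx.1]
  have hrange : range (q.comp clamp) ⊆ U := by
    rintro _ ⟨x, rfl⟩
    exact hmaps ⟨le_max_left _ _, max_le (hs.1.trans hs.2) (min_le_right _ _)⟩
  have := hc.2 _ (D.reparam_mem q hq clamp hclamp_mono) hrange hss'
  simpa [hclamp_eq s hs, hclamp_eq s' hs'] using this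

/-- Almost directed paths are weakly directed: any continuous path in the closure
of `dX` inside `C(I, X)` (with the compact-open topology, the default topology on
`C(I, X)` in Mathlib) is weakly directed. -/
theorem stmt_13 {X : Type*} [TopologicalSpace X] (D : DSpace X)
    (p : C(unitInterval, X)) (hp : p ∈ closure D.d) :
    IsWeaklyDirected D.d p := by
  intro U hU c hc t ht
  obtain ⟨a, b, -, hab_nhds, hab_sub⟩ := exists_Icc_mem_subset_of_mem_nhds
    (p.continuous.continuousAt.preimage_mem_nhds (hU.mem_nhds ht))
  refine ⟨Icc a b, hab_nhds, hab_sub, ?_⟩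
  have hclosure :
      closure D.d ⊆ {f : C(I, X) | MapsTo f (Icc a b) U → MonotoneOn (c ∘ f) (Icc a b)} :=
    closure_minimal (fun q hq hmaps => hc.monotoneOn_of_mapsTo D hq hmaps)
      (isClosed_setOf_mapsTo_imp_monotoneOn isCompact_Icc hU hc.1)
  exact hclosure hp hab_sub
end

section
/- Equip the real line with the set dL of continuous paths p : I → ℝ that are either constant or avoid 0 (i.e., 0 ∉ p(I)). Then (ℝ, dL) is a d-space, and the closure of dL in the space C(I, ℝ) of continuous maps with the compact-open topology is exactly the set of continuous paths p : I → ℝ with p(I) ⊆ [0, ∞) or p(I) ⊆ (−∞, 0]. In particular, this closure is not stable under concatenation. -/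
open unitInterval Topology Set

/-- The real line with directed paths those that are constant or avoid `0`. -/
def dL : Set C(unitInterval, ℝ) :=
  {p | (∃ x : ℝ, ∀ t, p t = x) ∨ ∀ t, p t ≠ 0}


/-!
A path of `dL` that is not identically `0` avoids `0`, so whether two such paths can be
concatenated, and whether the result avoids `0`, is decided at the junction point. By the
intermediate value theorem every path of `dL` stays on one side of `0`, and the one-sided paths
form a closed set; conversely a one-sided path is the limit of its shifts by small constants
pushing it away from `0`. Concatenating `t ↦ t - 1` with `t ↦ t` then leaves the closure.
-/

open Filter

lemma range_concatPath {X : Type*} [TopologicalSpace X] (p q : C(I, X)) (h : p 1 = q 0) :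
    range (concatPath p q h) = range p ∪ range q := by
  simp [concatPath, Path.trans_range]

@[simp]
lemma concatPath_apply_zero {X : Type*} [TopologicalSpace X] (p q : C(I, X)) (h : p 1 = q 0) :
    concatPath p q h 0 = p 0 :=
  Path.source _

@[simp]
lemma concatPath_apply_one {X : Type*} [TopologicalSpace X] (p q : C(I, X)) (h : p 1 = q 0) :
    concatPath p q h 1 = q 1 :=
  Path.target _

lemma mem_dL_iff {p : C(I, ℝ)} : p ∈ dL ↔ range p ⊆ {0} ∨ 0 ∉ range p := by
  simp only [dL, mem_ofPred_eq, range_subset_iff, mem_singleton_iff, mem_range, not_exists]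
  constructor
  · rintro (⟨x, hx⟩ | hp)
    · obtain rfl | hx0 := eq_or_ne x 0
      · exact Or.inl hx
      · exact Or.inr fun t => (hx t).trans_ne hx0
    · exact Or.inr hp
  · rintro (hp | hp)
    · exact Or.inl ⟨0, hp⟩
    · exact Or.inr hp

lemma concatPath_mem_dL {p q : C(I, ℝ)} (hp : p ∈ dL) (hq : q ∈ dL) (h : p 1 = q 0) :
    concatPath p q h ∈ dL := by
  rw [mem_dL_iff] at hp hq ⊢
  rw [range_concatPath, union_subset_iff, mem_union, not_or]
  by_cases h0 : p 1 = 0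
  · have hp0 : range p ⊆ {0} := hp.resolve_right fun hp => hp ⟨1, h0⟩
    have hq0 : range q ⊆ {0} := hq.resolve_right fun hq => hq ⟨0, h ▸ h0⟩
    exact Or.inl ⟨hp0, hq0⟩
  · have hp0 : 0 ∉ range p := hp.resolve_left fun hp => h0 (hp ⟨1, rfl⟩)
    have hq0 : 0 ∉ range q := hq.resolve_left fun hq => h0 (h ▸ hq ⟨0, rfl⟩)
    exact Or.inr ⟨hp0, hq0⟩

lemma comp_mem_dL {p : C(I, ℝ)} (hp : p ∈ dL) (φ : C(I, I)) : p.comp φ ∈ dL := by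
  rcases hp with ⟨x, hx⟩ | hp
  · exact Or.inl ⟨x, fun t => hx (φ t)⟩
  · exact Or.inr fun t => hp (φ t)

def signedPaths : Set C(I, ℝ) :=
  {p | (∀ t, 0 ≤ p t) ∨ ∀ t, p t ≤ 0}

lemma isClosed_signedPaths : IsClosed signedPaths := by
  simp only [signedPaths, ofPred_or, ofPred_forall]
  refine .union (isClosed_iInter fun t => ?_) (isClosed_iInter fun t => ?_)
  · exact isClosed_le continuous_const (continuous_eval_const t)
  · exact isClosed_le (continuous_eval_const t) continuous_const

lemma dL_subset_signedPaths : dL ⊆ signedPaths := by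
  intro p hp
  rcases mem_dL_iff.mp hp with hp | hp
  · exact Or.inl fun t => (hp ⟨t, rfl⟩).ge
  · by_contra hsign
    simp only [signedPaths, mem_ofPred_eq, not_or, not_forall, not_le] at hsign
    obtain ⟨⟨s, hs⟩, ⟨t, ht⟩⟩ := hsign
    exact hp ((isPreconnected_range p.continuous).Icc_subset
      (mem_range_self s) (mem_range_self t) ⟨hs.le, ht.le⟩)

lemma signedPaths_subset_closure_dL : signedPaths ⊆ closure dL := by
  intro p hp
  have hshift : Tendsto (fun ε : ℝ => p + ContinuousMap.const I ε) (𝓝 0) (𝓝 p) := by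
    have hcont : Continuous fun ε : ℝ => p + ContinuousMap.const I ε :=
      continuous_const.add ContinuousMap.continuous_const'
    simpa using hcont.tendsto 0
  rcases hp with hp | hp
  · refine mem_closure_of_tendsto (hshift.mono_left (nhdsWithin_le_nhds (s := Ioi 0))) ?_
    filter_upwards [self_mem_nhdsWithin] with ε (hε : 0 < ε)
    exact Or.inr fun t => by simp only [ContinuousMap.add_apply,
      ContinuousMap.const_apply]; linarith [hp t]
  · refine mem_closure_of_tendsto (hshift.mono_left (nhdsWithin_le_nhds (s := Iio 0))) ?_
    filter_upwards [self_mem_nhdsWithin] with ε (hε : ε < 0)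
    exact Or.inr fun t => by simp only [ContinuousMap.add_apply,
      ContinuousMap.const_apply]; linarith [hp t]

lemma closure_dL : closure dL = signedPaths :=
  (closure_minimal dL_subset_signedPaths isClosed_signedPaths).antisymm
    signedPaths_subset_closure_dL

lemma not_concatPath_mem_closure_dL :
    ¬ ∀ p ∈ closure dL, ∀ q ∈ closure dL, ∀ h : p 1 = q 0, concatPath p q h ∈ closure dL := by
  intro hstable
  let p : C(I, ℝ) := ⟨fun t => (t : ℝ) - 1, by fun_prop⟩
  let q : C(I, ℝ) := ⟨fun t => (t : ℝ), by fun_prop⟩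
  have hp : p ∈ closure dL := closure_dL ▸ Or.inr fun t => sub_nonpos.mpr t.2.2
  have hq : q ∈ closure dL := closure_dL ▸ Or.inl fun t => t.2.1
  have hpq : p 1 = q 0 := by simp [p, q]
  rcases closure_dL ▸ hstable p hp q hq hpq with hpos | hneg
  · have := hpos 0
    norm_num [p] at this
  · have := hneg 1
    norm_num [q] at this

/-- `(ℝ, dL)` is a d-space; the closure of `dL` in `C(I, ℝ)` (compact-open
topology, the default topology on `C(I, ℝ)`) is exactly the set of paths staying
in `[0, ∞)` or in `(-∞, 0]`; and this closure is not stable under concatenation. -/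
theorem stmt_14 :
    (∀ x : ℝ, ContinuousMap.const unitInterval x ∈ dL) ∧
    (∀ p ∈ dL, ∀ q ∈ dL, ∀ h : p 1 = q 0, concatPath p q h ∈ dL) ∧
    (∀ p ∈ dL, ∀ φ : C(unitInterval, unitInterval), Monotone ⇑φ → p.comp φ ∈ dL) ∧
    closure dL = {p : C(unitInterval, ℝ) | (∀ t, 0 ≤ p t) ∨ ∀ t, p t ≤ 0} ∧
    ¬ (∀ p ∈ closure dL, ∀ q ∈ closure dL, ∀ h : p 1 = q 0,
        concatPath p q h ∈ closure dL) :=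
  ⟨fun x => Or.inl ⟨x, fun _ => rfl⟩,
    fun _ hp _ hq h => concatPath_mem_dL hp hq h,
    fun _ hp φ _ => comp_mem_dL hp φ,
    closure_dL,
    not_concatPath_mem_closure_dL⟩
end

section
/- For t ∈ ℝ, let C_t = (t, t², t³) ∈ ℝ³, and let C = {C_t : t ∈ ℝ} be the twisted cubic curve. Two distinct chords of C cannot meet outside C: if a < b and c < d with (a, b) ≠ (c, d), then [C_a, C_b] ∩ [C_c, C_d] ⊆ {C_a, C_b} ∩ {C_c, C_d}; in particular, if {a, b} ∩ {c, d} = ∅, the two segments are disjoint. -/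
/-- The parametrisation `t ↦ (t, t², t³)` of the twisted cubic in `ℝ³`. -/
def Ct (t : ℝ) : Fin 3 → ℝ := ![t, t ^ 2, t ^ 3]

private lemma seg_end_left {x y p : Fin 3 → ℝ} {s t : ℝ} (hst : s + t = 1)
    (hp : s • x + t • y = p) (h : t = 0) : p = x := by
  subst h
  have hs : s = 1 := by linarith
  subst hs
  simpa using hp.symm

private lemma seg_end_right {x y p : Fin 3 → ℝ} {s t : ℝ} (hst : s + t = 1)
    (hp : s • x + t • y = p) (h : s = 0) : p = y := by
  subst h
  have ht : t = 1 := by linarith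
  subst ht
  simpa using hp.symm

/-- Two distinct chords of the twisted cubic cannot meet outside the curve: their
intersection is contained in the common endpoints; in particular chords with no
common endpoint are disjoint. -/
theorem stmt_16 {a b c d : ℝ} (hab : a < b) (hcd : c < d) (hne : (a, b) ≠ (c, d)) :
    segment ℝ (Ct a) (Ct b) ∩ segment ℝ (Ct c) (Ct d) ⊆
      ({Ct a, Ct b} ∩ {Ct c, Ct d} : Set (Fin 3 → ℝ)) ∧
    (({a, b} : Set ℝ) ∩ {c, d} = ∅ →
      Disjoint (segment ℝ (Ct a) (Ct b)) (segment ℝ (Ct c) (Ct d))) := by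
  have main : segment ℝ (Ct a) (Ct b) ∩ segment ℝ (Ct c) (Ct d) ⊆
      ({Ct a, Ct b} ∩ {Ct c, Ct d} : Set (Fin 3 → ℝ)) := by
    rintro p ⟨⟨s, t, hs, ht, hst, hp⟩, ⟨u, v, hu, hv, huv, hq⟩⟩
    have h0 : s * a + t * b = p 0 := by simpa [Ct] using congrFun hp 0
    have h1 : s * a ^ 2 + t * b ^ 2 = p 1 := by simpa [Ct] using congrFun hp 1
    have h2 : s * a ^ 3 + t * b ^ 3 = p 2 := by simpa [Ct] using congrFun hp 2
    have g0 : u * c + v * d = p 0 := by simpa [Ct] using congrFun hq 0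
    have g1 : u * c ^ 2 + v * d ^ 2 = p 1 := by simpa [Ct] using congrFun hq 1
    have g2 : u * c ^ 3 + v * d ^ 3 = p 2 := by simpa [Ct] using congrFun hq 2
    have keyAB : p 1 - p 0 ^ 2 = s * t * (b - a) ^ 2 := by
      have ht' : t = 1 - s := by linarith
      subst ht'
      linear_combination (s * a + (1 - s) * b + p 0) * h0 - h1
    have keyCD : p 1 - p 0 ^ 2 = u * v * (d - c) ^ 2 := by
      have hv' : v = 1 - u := by linarith
      subst hv'
      linear_combination (u * c + (1 - u) * d + p 0) * g0 - g1
    rcases eq_or_lt_of_le (mul_nonneg hs ht) with hst0 | hstpos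
    · -- p is an endpoint of the first chord, hence on the curve,
      -- hence an endpoint of the second chord.
      have h1eq : p 1 = p 0 ^ 2 := by
        rcases mul_eq_zero.mp hst0.symm with h | h
        · have := seg_end_right hst hp h
          subst this
          simp [Ct]
        · have := seg_end_left hst hp h
          subst this
          simp [Ct]
      have huv0 : u * v = 0 := by
        have hd0 : (0:ℝ) < d - c := by linarith
        have hd : (d - c) ^ 2 > 0 := by positivity
        nlinarith [keyCD, h1eq]
      have hp2 : p = Ct c ∨ p = Ct d := by
        rcases mul_eq_zero.mp huv0 with h | h
        · exact Or.inr (seg_end_right huv hq h)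
        · exact Or.inl (seg_end_left huv hq h)
      have hp1 : p = Ct a ∨ p = Ct b := by
        rcases mul_eq_zero.mp hst0.symm with h | h
        · exact Or.inr (seg_end_right hst hp h)
        · exact Or.inl (seg_end_left hst hp h)
      exact ⟨hp1, hp2⟩
    · -- interior of first chord; then also interior of second, and chords coincide
      exfalso
      have hba0 : (0:ℝ) < b - a := by linarith
      have hba : (0:ℝ) < (b - a) ^ 2 := by positivity
      have hpos : p 1 - p 0 ^ 2 > 0 := by nlinarith [keyAB]
      have e1a : (a + b) * p 0 - a * b = p 1 := by
        linear_combination h1 - (a + b) * h0 + a * b * hst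
      have e2a : (a + b) * p 1 - a * b * p 0 = p 2 := by
        linear_combination h2 - (a + b) * h1 + a * b * h0
      have e1c : (c + d) * p 0 - c * d = p 1 := by
        linear_combination g1 - (c + d) * g0 + c * d * huv
      have e2c : (c + d) * p 1 - c * d * p 0 = p 2 := by
        linear_combination g2 - (c + d) * g1 + c * d * g0
      have hsum0 : (a + b - (c + d)) * (p 1 - p 0 ^ 2) = 0 := by
        linear_combination e2a - e2c - p 0 * (e1a - e1c)
      have hsum : a + b = c + d := by
        rcases mul_eq_zero.mp hsum0 with h | h
        · linarith
        · linarith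
      have hprod : a * b = c * d := by
        linear_combination e1c - e1a + p 0 * hsum
      have hroot : (a - c) * (a - d) = 0 := by
        linear_combination a * hsum - hprod
      rcases mul_eq_zero.mp hroot with h | h
      · have hb : b = d := by linarith
        have ha : a = c := by linarith
        exact hne (by simp [ha, hb])
      · have ha : a = d := by linarith
        have hb : b = c := by linarith
        linarith
  refine ⟨main, fun hdisj => ?_⟩
  have hac : a ≠ c := fun h => (Set.eq_empty_iff_forall_notMem.mp hdisj a) ⟨by simp, by simp [h]⟩
  have had : a ≠ d := fun h => (Set.eq_empty_iff_forall_notMem.mp hdisj a) ⟨by simp, by simp [h]⟩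
  have hbc : b ≠ c := fun h => (Set.eq_empty_iff_forall_notMem.mp hdisj b) ⟨by simp, by simp [h]⟩
  have hbd : b ≠ d := fun h => (Set.eq_empty_iff_forall_notMem.mp hdisj b) ⟨by simp, by simp [h]⟩
  have hCt : ∀ x y : ℝ, Ct x = Ct y → x = y := by
    intro x y h
    simpa [Ct] using congrFun h 0
  rw [Set.disjoint_left]
  intro p hp1 hp2
  obtain ⟨h1, h2⟩ := main ⟨hp1, hp2⟩
  simp only [Set.mem_insert_iff, Set.mem_singleton_iff] at h1 h2
  rcases h1 with rfl | rfl <;> rcases h2 with h | h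
  · exact hac (hCt _ _ h)
  · exact had (hCt _ _ h)
  · exact hbc (hCt _ _ h)
  · exact hbd (hCt _ _ h)
end

section
/- Separately directed implies directed for saturated targets: let (X, dX) be a saturated d-space and let h : I × I → X be a continuous map such that for every t ∈ I the paths s ↦ h(s, t) and s ↦ h(t, s) belong to dX. Then for every continuous map r : I → I × I both of whose coordinate projections are non-decreasing, the composite h ∘ r belongs to dX; in other words, h is a morphism of d-spaces from the product I↑ × I↑ to (X, dX). -/
/-!
A weakly directed path only has to be tested locally. Near any point of the square, a directed
function `c` can be followed from `(s₁, t₁)` to a point `(s₂, t₂)` above it through the corner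
`(s₂, t₁)`, along a horizontal and then a vertical section of `h`; both are directed, so `c ∘ h`
is monotone on small boxes. Hence `h ∘ r` is weakly directed for every monotone `r`, and
saturation makes it directed.
-/

open unitInterval Topology Set

def IsSeparatelyDirected {X : Type*} [TopologicalSpace X] (d : Set C(unitInterval, X))
    (h : C(unitInterval × unitInterval, X)) : Prop :=
  ∀ t : unitInterval,
    h.comp (ContinuousMap.mk (fun s => (s, t)) (by fun_prop)) ∈ d ∧
    h.comp (ContinuousMap.mk (fun s => (t, s)) (by fun_prop)) ∈ d

lemma Set.Icc.monotone_convexComb {a b : ℝ} {x y : Set.Icc a b} (hxy : x ≤ y) :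
    Monotone (Set.Icc.convexComb x y) := by
  intro s t hst
  have hxy' : (x : ℝ) ≤ y := hxy
  have hst' : (s : ℝ) ≤ t := hst
  show (1 - (s : ℝ)) * x + s * y ≤ (1 - (t : ℝ)) * x + t * y
  nlinarith

lemma exists_Icc_mem_subset_of_mem_nhds_prod {α β : Type*} [LinearOrder α] [TopologicalSpace α]
    [OrderTopology α] [LinearOrder β] [TopologicalSpace β] [OrderTopology β] {z : α × β}
    {s : Set (α × β)} (hs : s ∈ 𝓝 z) : ∃ x y, Icc x y ∈ 𝓝 z ∧ Icc x y ⊆ s := by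
  obtain ⟨A, hA, B, hB, hAB⟩ := mem_nhds_prod_iff.mp hs
  obtain ⟨a₁, b₁, -, hA', hA's⟩ := exists_Icc_mem_subset_of_mem_nhds hA
  obtain ⟨a₂, b₂, -, hB', hB's⟩ := exists_Icc_mem_subset_of_mem_nhds hB
  refine ⟨(a₁, a₂), (b₁, b₂), ?_, ?_⟩
  · rw [Icc_prod_eq, nhds_prod_eq]
    exact Filter.prod_mem_prod hA' hB'
  · rw [Icc_prod_eq]
    exact (prod_mono hA's hB's).trans hAB

namespace IsDirectedFn

variable {X : Type*} [TopologicalSpace X] {D : DSpace X} {U : Set X} {c : X → unitInterval}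

lemma le_of_mapsTo (hc : IsDirectedFn D.d U c) {p : C(unitInterval, X)} (hp : p ∈ D.d)
    {a b : unitInterval} (hab : a ≤ b) (hpU : MapsTo p (Icc a b) U) : c (p a) ≤ c (p b) := by
  let φ : C(unitInterval, unitInterval) := ⟨Set.Icc.convexComb a b, by fun_prop⟩
  have hφ : MapsTo φ univ (Icc a b) := fun s _ =>
    ⟨Set.Icc.le_convexComb hab s, Set.Icc.convexComb_le hab s⟩
  have hmono := hc.2 (p.comp φ) (D.reparam_mem p hp φ (Set.Icc.monotone_convexComb hab))
    (range_subset_iff.mpr fun s => hpU (hφ (mem_univ s)))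
  simpa [φ] using hmono (zero_le_one' unitInterval)

lemma monotoneOn_comp_of_ordConnected (hc : IsDirectedFn D.d U c)
    {h : C(unitInterval × unitInterval, X)} (hsep : IsSeparatelyDirected D.d h)
    {S : Set (unitInterval × unitInterval)} (hS : S.OrdConnected) (hSU : MapsTo h S U) :
    MonotoneOn (c ∘ h) S := by
  intro p hp q hq hpq
  have hIcc : MapsTo h (Icc p q) U := hSU.mono_left (hS.out hp hq)
  have horizontal : c (h p) ≤ c (h (q.1, p.2)) :=
    hc.le_of_mapsTo (hsep p.2).1 hpq.1 fun s hs => hIcc ⟨⟨hs.1, le_rfl⟩, ⟨hs.2, hpq.2⟩⟩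
  have vertical : c (h (q.1, p.2)) ≤ c (h q) :=
    hc.le_of_mapsTo (hsep q.1).2 hpq.2 fun s hs => hIcc ⟨⟨hpq.1, hs.1⟩, ⟨le_rfl, hs.2⟩⟩
  exact horizontal.trans vertical

end IsDirectedFn

lemma IsSeparatelyDirected.comp_mem_satPaths {X : Type*} [TopologicalSpace X] {D : DSpace X}
    {h : C(unitInterval × unitInterval, X)} (hsep : IsSeparatelyDirected D.d h)
    {r : C(unitInterval, unitInterval × unitInterval)} (hr : Monotone r) :
    h.comp r ∈ satPaths D.d := by
  intro U hU c hc t ht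
  obtain ⟨x, y, hxy, hxyU⟩ := exists_Icc_mem_subset_of_mem_nhds_prod
    ((hU.preimage h.continuous).mem_nhds ht)
  refine ⟨r ⁻¹' Icc x y, r.continuous.continuousAt.preimage_mem_nhds hxy,
    preimage_mono hxyU, ?_⟩
  exact (hc.monotoneOn_comp_of_ordConnected hsep ordConnected_Icc hxyU).comp
    (hr.monotoneOn _) (mapsTo_preimage r _)

/-- Separately directed implies directed for saturated targets: if `(X, dX)` is
saturated and `h : I × I → X` is continuous with all of its horizontal and vertical
sections directed, then `h ∘ r` is directed for every continuous `r : I → I × I`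
with non-decreasing coordinate projections, i.e. `h` is a morphism of d-spaces
from `I↑ × I↑` to `(X, dX)`. -/
theorem stmt_17 {X : Type*} [TopologicalSpace X] (D : DSpace X) (hD : IsSaturated D.d)
    (h : C(unitInterval × unitInterval, X))
    (hsep : ∀ t : unitInterval,
      h.comp (ContinuousMap.mk (fun s => (s, t)) (by fun_prop)) ∈ D.d ∧
      h.comp (ContinuousMap.mk (fun s => (t, s)) (by fun_prop)) ∈ D.d) :
    ∀ r : C(unitInterval, unitInterval × unitInterval),
      Monotone (fun u => (r u).1) → Monotone (fun u => (r u).2) →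
        h.comp r ∈ D.d := by
  intro r hr₁ hr₂
  rw [← hD]
  exact IsSeparatelyDirected.comp_mem_satPaths hsep (hr₁.prodMk hr₂)
end

section
/- Saturated d-spaces are stable under reversion: let (X, dX) be a saturated d-space and let RdX = {t ↦ p(1−t) : p ∈ dX} be the set of reversed directed paths. Then (X, RdX) is a d-space; for every open U ⊆ X, a continuous map c : U → I is a directed function of (X, RdX) on U if and only if 1 − c is a directed function of (X, dX) on U; and (X, RdX) is saturated. -/
open unitInterval Topology Set

/-- The reversal `t ↦ 1 - t` of the unit interval, as a continuous map. -/
def revCM : C(unitInterval, unitInterval) :=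
  ⟨unitInterval.symm, unitInterval.continuous_symm⟩

/-- The set of reversed directed paths `{t ↦ p(1 - t) : p ∈ d}`. -/
def revPaths {X : Type*} [TopologicalSpace X] (d : Set C(unitInterval, X)) :
    Set C(unitInterval, X) :=
  (fun p : C(unitInterval, X) => p.comp revCM) '' d

/-!
Reversal `t ↦ 1 - t` is an order-reversing involution of `I` and conjugates all of the structure:
the reversal of a concatenation is the concatenation of the reversals in the opposite order, and
conjugating a monotone reparametrization by reversal gives a monotone one, so `RdX` is a d-space.
Along a reversed path `c` is non-decreasing exactly when `1 - c` is non-decreasing along the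
original one, so the directed functions of `RdX` are the `1 - c` with `c` directed for `dX`.
Transporting weak directedness the same way, the weakly directed paths of `RdX` are the reversals
of those of `dX`, and saturation passes over.
-/

namespace unitInterval

lemma monotone_symm_comp_iff {α : Type*} [Preorder α] {f : α → I} :
    Monotone (fun a => σ (f a)) ↔ Antitone f := by
  simp only [Monotone, Antitone, symm_le_symm]

lemma monotone_comp_symm_iff {β : Type*} [Preorder β] {f : I → β} :
    Monotone (fun t => f (σ t)) ↔ Antitone f := by
  refine ⟨fun h s t hst => ?_, fun h s t hst => h (symm_le_symm.mpr hst)⟩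
  simpa only [symm_symm] using h (symm_le_symm.mpr hst)

end unitInterval

section Reversal

variable {X : Type*} [TopologicalSpace X]

@[simp] lemma revCM_apply (t : I) : revCM t = σ t := rfl

@[simp] lemma revCM_comp_revCM : revCM.comp revCM = ContinuousMap.id I := by
  ext t
  simp [symm_symm]

lemma range_comp_revCM (p : C(I, X)) : range (p.comp revCM) = range p :=
  symm_bijective.surjective.range_comp p

lemma mem_revPaths_iff {d : Set C(I, X)} {p : C(I, X)} : p ∈ revPaths d ↔ p.comp revCM ∈ d :=
  ⟨by rintro ⟨q, hq, rfl⟩; simpa using hq, fun hp => ⟨p.comp revCM, hp, by simp⟩⟩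

lemma concatPath_comp_revCM (p q : C(I, X)) (h : p 1 = q 0) :
    (concatPath p q h).comp revCM =
      concatPath (q.comp revCM) (p.comp revCM) (by simpa [symm_one, symm_zero] using h.symm) :=
  congrArg Path.toContinuousMap <| Path.trans_symm (⟨p, rfl, rfl⟩ : Path (p 0) (p 1))
    ((⟨q, rfl, rfl⟩ : Path (q 0) (q 1)).cast h rfl)

def DSpace.rev (D : DSpace X) : DSpace X where
  d := revPaths D.d
  const_mem x := mem_revPaths_iff.mpr (D.const_mem x)
  concat_mem p hp q hq h := by
    rw [mem_revPaths_iff, concatPath_comp_revCM]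
    exact D.concat_mem _ (mem_revPaths_iff.mp hq) _ (mem_revPaths_iff.mp hp) _
  reparam_mem p hp φ hφ := by
    have hconj : ((p.comp φ).comp revCM) = (p.comp revCM).comp (revCM.comp (φ.comp revCM)) := by
      ext t
      simp [symm_symm]
    rw [mem_revPaths_iff, hconj]
    refine D.reparam_mem _ (mem_revPaths_iff.mp hp) _ ?_
    exact monotone_symm_comp_iff.mpr (hφ.comp_antitone strictAnti_symm.antitone)

lemma isDirectedFn_revPaths_iff (d : Set C(I, X)) (U : Set X) (c : X → I) :
    IsDirectedFn (revPaths d) U c ↔ IsDirectedFn d U (fun x => σ (c x)) := by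
  refine and_congr (symmHomeomorph.comp_continuousOn_iff c U).symm ?_
  simp only [revPaths, forall_mem_image, range_comp_revCM]
  refine forall₂_congr fun p _ => imp_congr_right fun _ => ?_
  exact (monotone_comp_symm_iff (f := fun t => c (p t))).trans monotone_symm_comp_iff.symm

lemma IsWeaklyDirected.comp_revCM {d₁ d₂ : Set C(I, X)}
    (hfn : ∀ U c, IsDirectedFn d₂ U c → IsDirectedFn d₁ U (fun x => σ (c x)))
    {p : C(I, X)} (hp : IsWeaklyDirected d₁ p) : IsWeaklyDirected d₂ (p.comp revCM) := by
  intro U hU c hc t ht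
  obtain ⟨V, hV, hVU, hVmono⟩ := hp U hU _ (hfn U c hc) (σ t) ht
  refine ⟨σ ⁻¹' V, continuous_symm.continuousAt.preimage_mem_nhds hV, fun s hs => hVU hs, ?_⟩
  intro s hs s' hs' hss'
  exact symm_le_symm.mp (hVmono hs' hs (symm_le_symm.mpr hss'))

lemma isWeaklyDirected_revPaths_iff {d : Set C(I, X)} {p : C(I, X)} :
    IsWeaklyDirected (revPaths d) p ↔ IsWeaklyDirected d (p.comp revCM) := by
  refine ⟨IsWeaklyDirected.comp_revCM fun U c hc => ?_, fun h => ?_⟩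
  · rw [isDirectedFn_revPaths_iff]
    simpa only [symm_symm] using hc
  · simpa using h.comp_revCM fun U c => (isDirectedFn_revPaths_iff d U c).mp

lemma satPaths_revPaths (d : Set C(I, X)) : satPaths (revPaths d) = revPaths (satPaths d) := by
  ext p
  exact isWeaklyDirected_revPaths_iff.trans (mem_revPaths_iff (d := satPaths d)).symm

lemma IsSaturated.revPaths {d : Set C(I, X)} (hd : IsSaturated d) : IsSaturated (revPaths d) := by
  rw [IsSaturated, satPaths_revPaths, hd]

end Reversal

/-- Saturated d-spaces are stable under reversion: for a saturated d-space
`(X, dX)`, the reversed paths `RdX` form a d-space structure; directed functions of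
`(X, RdX)` on an open `U` are exactly the maps `c` with `1 - c` a directed function
of `(X, dX)` on `U`; and `(X, RdX)` is saturated. -/
theorem stmt_18 {X : Type*} [TopologicalSpace X] (D : DSpace X) (hD : IsSaturated D.d) :
    (∀ x : X, ContinuousMap.const unitInterval x ∈ revPaths D.d) ∧
    (∀ p ∈ revPaths D.d, ∀ q ∈ revPaths D.d, ∀ h : p 1 = q 0,
      concatPath p q h ∈ revPaths D.d) ∧
    (∀ p ∈ revPaths D.d, ∀ φ : C(unitInterval, unitInterval), Monotone ⇑φ →
      p.comp φ ∈ revPaths D.d) ∧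
    (∀ U : Set X, IsOpen U → ∀ c : X → unitInterval,
      (IsDirectedFn (revPaths D.d) U c ↔
        IsDirectedFn D.d U (fun x => unitInterval.symm (c x)))) ∧
    IsSaturated (revPaths D.d) :=
  ⟨D.rev.const_mem, D.rev.concat_mem, D.rev.reparam_mem,
    fun U _ c => isDirectedFn_revPaths_iff D.d U c, hD.revPaths⟩
end
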